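/- arXiv:1903.09511 — 11 statements merged into one kernel-verified Lean document; each statement's English description precedes it below -/
import Mathlib

section
/- For every nonnegative integer n, ∫_{-1/2}^{3/2} (3x² - 2x³)ⁿ dx = 2 ∫_{0}^{1} (3x² - 2x³)ⁿ dx. -/
/-!
For `t ∈ [0, 1]` the equation `3x² - 2x³ = 3t² - 2t³` has, besides `x = t`, the roots
`r₋(t) = (3 - 2t - √(9 + 12t - 12t²))/4 ∈ [-1/2, 0]` and
`r₊(t) = (3 - 2t + √(9 + 12t - 12t²))/4 ∈ [1, 3/2]`.
Substituting `x = r₋(t)` on `[-1/2, 0]` and `x = r₊(t)` on `[1, 3/2]` turns both outer integrals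
into integrals over `[0, 1]` of the same integrand weighted by `-r₋'` and `-r₊'`; by Vieta
`t + r₋(t) + r₊(t) = 3/2`, so these weights add up to `1`. This works for `G(3x² - 2x³)`
with any continuous `G`, not only for monomials.
-/

open Set intervalIntegral

noncomputable section

def smoothstep (x : ℝ) : ℝ := 3 * x ^ 2 - 2 * x ^ 3

lemma continuous_smoothstep : Continuous smoothstep := by
  unfold smoothstep
  fun_prop

/-- For `c = ±1`, the two roots of `smoothstep x = smoothstep t` other than `t`. -/
def conjRoot (c t : ℝ) : ℝ := (3 - 2 * t + c * √(9 + 12 * t - 12 * t ^ 2)) / 4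

def conjRootDeriv (c t : ℝ) : ℝ :=
  (-2 + c * ((12 - 24 * t) / (2 * √(9 + 12 * t - 12 * t ^ 2)))) / 4

lemma smoothstep_eq_of_sq_eq {s t : ℝ} (hs : s ^ 2 = 9 + 12 * t - 12 * t ^ 2) :
    smoothstep ((3 - 2 * t + s) / 4) = smoothstep t := by
  unfold smoothstep
  linear_combination ((6 * t - 3 - s) / 32) * hs

lemma conjRoot_radicand_pos {t : ℝ} (ht : t ∈ Ioo (-1/2 : ℝ) (3/2)) :
    0 < 9 + 12 * t - 12 * t ^ 2 := by
  nlinarith [ht.1, ht.2]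

lemma smoothstep_conjRoot {c t : ℝ} (hc : c ^ 2 = 1) (ht : t ∈ Ioo (-1/2 : ℝ) (3/2)) :
    smoothstep (conjRoot c t) = smoothstep t := by
  apply smoothstep_eq_of_sq_eq
  rw [mul_pow, hc, one_mul, Real.sq_sqrt (conjRoot_radicand_pos ht).le]

lemma hasDerivAt_conjRoot (c : ℝ) {t : ℝ} (ht : t ∈ Ioo (-1/2 : ℝ) (3/2)) :
    HasDerivAt (conjRoot c) (conjRootDeriv c t) t := by
  have hq : HasDerivAt (fun t : ℝ => 9 + 12 * t - 12 * t ^ 2) (12 - 24 * t) t :=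
    (((hasDerivAt_id t).const_mul 12).const_add 9 |>.sub
      ((hasDerivAt_pow 2 t).const_mul 12)).congr_deriv (by norm_num; ring)
  exact (((hasDerivAt_id t).const_mul 2).const_sub 3 |>.add
    ((hq.sqrt (conjRoot_radicand_pos ht).ne').const_mul c) |>.div_const 4).congr_deriv
      (by rw [conjRootDeriv]; ring)

lemma continuousOn_conjRootDeriv (c : ℝ) :
    ContinuousOn (conjRootDeriv c) (Ioo (-1/2 : ℝ) (3/2)) := by
  unfold conjRootDeriv
  refine ContinuousOn.div_const (continuousOn_const.add (continuousOn_const.mul ?_)) _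
  exact ContinuousOn.div (by fun_prop) (by fun_prop)
    fun t ht => by have := conjRoot_radicand_pos ht; positivity

lemma conjRootDeriv_neg_one_add_conjRootDeriv_one (t : ℝ) :
    conjRootDeriv (-1) t + conjRootDeriv 1 t = -1 := by
  unfold conjRootDeriv
  ring

lemma conjRoot_zero (c : ℝ) : conjRoot c 0 = (3 + 3 * c) / 4 := by
  norm_num [conjRoot]
  ring

lemma conjRoot_one (c : ℝ) : conjRoot c 1 = (1 + 3 * c) / 4 := by
  norm_num [conjRoot]
  ring

lemma uIcc_zero_one_subset_Ioo : uIcc (0 : ℝ) 1 ⊆ Ioo (-1/2) (3/2) := by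
  rw [uIcc_of_le zero_le_one]
  exact Icc_subset_Ioo (by norm_num) (by norm_num)

section

variable {E : Type*} [NormedAddCommGroup E] [NormedSpace ℝ E] {G : ℝ → E}

lemma intervalIntegrable_conjRootDeriv_smul (hG : Continuous G) (c : ℝ) :
    IntervalIntegrable (fun t => conjRootDeriv c t • G (smoothstep t)) MeasureTheory.volume 0 1 :=
  ((continuousOn_conjRootDeriv c).mono uIcc_zero_one_subset_Ioo |>.smul
    (hG.comp continuous_smoothstep).continuousOn).intervalIntegrable

lemma integral_comp_smoothstep_conjRoot (hG : Continuous G) {c : ℝ} (hc : c ^ 2 = 1) :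
    ∫ x in conjRoot c 0..conjRoot c 1, G (smoothstep x) =
      ∫ t in (0 : ℝ)..1, conjRootDeriv c t • G (smoothstep t) := by
  rw [← integral_deriv_smul_comp (g := fun x => G (smoothstep x))
    (fun t ht => hasDerivAt_conjRoot c (uIcc_zero_one_subset_Ioo ht))
    ((continuousOn_conjRootDeriv c).mono uIcc_zero_one_subset_Ioo)
    (hG.comp continuous_smoothstep)]
  refine integral_congr fun t ht => ?_
  simp only [Function.comp, smoothstep_conjRoot hc (uIcc_zero_one_subset_Ioo ht)]

theorem integral_comp_smoothstep (hG : Continuous G) :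
    ∫ x in (-1/2 : ℝ)..(3/2), G (smoothstep x) =
      (2 : ℝ) • ∫ x in (0 : ℝ)..1, G (smoothstep x) := by
  have hlower : ∫ x in (0 : ℝ)..(-1/2), G (smoothstep x) =
      ∫ t in (0 : ℝ)..1, conjRootDeriv (-1) t • G (smoothstep t) := by
    convert integral_comp_smoothstep_conjRoot hG (c := -1) (by norm_num) using 2 <;>
      norm_num [conjRoot_zero, conjRoot_one]
  have hupper : ∫ x in (3/2 : ℝ)..1, G (smoothstep x) =
      ∫ t in (0 : ℝ)..1, conjRootDeriv 1 t • G (smoothstep t) := by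
    convert integral_comp_smoothstep_conjRoot hG (c := 1) (by norm_num) using 2 <;>
      norm_num [conjRoot_zero, conjRoot_one]
  have hweights : (∫ t in (0 : ℝ)..1, conjRootDeriv (-1) t • G (smoothstep t)) +
      (∫ t in (0 : ℝ)..1, conjRootDeriv 1 t • G (smoothstep t)) =
        -∫ t in (0 : ℝ)..1, G (smoothstep t) := by
    rw [← integral_add (intervalIntegrable_conjRootDeriv_smul hG _)
      (intervalIntegrable_conjRootDeriv_smul hG _), ← integral_neg]
    refine integral_congr fun t _ => ?_
    simp only [← add_smul, conjRootDeriv_neg_one_add_conjRootDeriv_one, neg_one_smul]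
  have hint (a b : ℝ) : IntervalIntegrable (fun x => G (smoothstep x)) MeasureTheory.volume a b :=
    (hG.comp continuous_smoothstep).intervalIntegrable a b
  calc ∫ x in (-1/2 : ℝ)..(3/2), G (smoothstep x)
      = (∫ x in (-1/2 : ℝ)..0, G (smoothstep x)) + (∫ x in (0 : ℝ)..1, G (smoothstep x)) +
          ∫ x in (1 : ℝ)..(3/2), G (smoothstep x) := by
        rw [integral_add_adjacent_intervals (hint _ _) (hint _ _),
          integral_add_adjacent_intervals (hint _ _) (hint _ _)]
    _ = -((∫ t in (0 : ℝ)..1, conjRootDeriv (-1) t • G (smoothstep t)) +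
          (∫ t in (0 : ℝ)..1, conjRootDeriv 1 t • G (smoothstep t))) +
          ∫ x in (0 : ℝ)..1, G (smoothstep x) := by
        rw [integral_symm 0, integral_symm (3/2), hlower, hupper]
        abel
    _ = (2 : ℝ) • ∫ x in (0 : ℝ)..1, G (smoothstep x) := by
        rw [hweights, neg_neg, two_smul]

end

end

theorem ruehr_monomial (n : ℕ) :
    ∫ x in (-1/2 : ℝ)..(3/2 : ℝ), (3 * x ^ 2 - 2 * x ^ 3) ^ n =
      2 * ∫ x in (0 : ℝ)..(1 : ℝ), (3 * x ^ 2 - 2 * x ^ 3) ^ n :=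
  integral_comp_smoothstep (continuous_pow n)
end

section
/- Define L(n) = ∫_{-1/2}^{3/2} (3x² - 2x³)ⁿ dx for nonnegative integers n. Then for every nonnegative integer n, 9(n+1)(2n+1)·L(n) - 2(3n+4)(3n+2)·L(n+1) = 2. -/
/-!
Creative telescoping. With `f x = 3x² - 2x³` and the Almkvist–Zeilberger certificate
`pₙ x = x (3 - 2x) (3(n+1) + (3n+2) x (1 - 2x))`, one checks the identity
`(pₙ fⁿ)' = 9(n+1)(2n+1) fⁿ - 2(3n+4)(3n+2) fⁿ⁺¹`. Integrating over `[-1/2, 3/2]` leaves the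
boundary term `pₙ(3/2) f(3/2)ⁿ - pₙ(-1/2) f(-1/2)ⁿ = 0 - (-2) · 1 = 2`.
-/

open intervalIntegral

theorem const_mul_integral_sub_eq_of_hasDerivAt {F g h : ℝ → ℝ} {c d : ℝ} (a b : ℝ)
    (hF : ∀ x, HasDerivAt F (c * g x - d * h x) x) (hg : Continuous g) (hh : Continuous h) :
    c * (∫ x in a..b, g x) - d * ∫ x in a..b, h x = F b - F a := by
  have hcg : IntervalIntegrable (fun x => c * g x) MeasureTheory.volume a b :=
    (hg.intervalIntegrable a b).const_mul c
  have hdh : IntervalIntegrable (fun x => d * h x) MeasureTheory.volume a b :=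
    (hh.intervalIntegrable a b).const_mul d
  rw [← integral_const_mul, ← integral_const_mul d, ← integral_sub hcg hdh]
  exact integral_eq_sub_of_hasDerivAt (fun x _ => hF x) (hcg.sub hdh)

namespace Ruehr

def cubic (x : ℝ) : ℝ := 3 * x ^ 2 - 2 * x ^ 3

def certificate (n : ℕ) (x : ℝ) : ℝ :=
  x * (3 - 2 * x) * (3 * (n + 1) + (3 * n + 2) * x * (1 - 2 * x))

theorem continuous_cubic_pow (n : ℕ) : Continuous fun x => cubic x ^ n := by
  unfold cubic
  fun_prop

theorem hasDerivAt_cubic (x : ℝ) : HasDerivAt cubic (6 * x * (1 - x)) x :=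
  (((hasDerivAt_pow 2 x).const_mul 3).sub ((hasDerivAt_pow 3 x).const_mul 2)).congr_deriv
    (by ring)

theorem hasDerivAt_certificate (n : ℕ) (x : ℝ) :
    HasDerivAt (certificate n)
      (9 * (n + 1) + 6 * n * x - 24 * (3 * n + 2) * x ^ 2 + 16 * (3 * n + 2) * x ^ 3) x := by
  have hx := hasDerivAt_id' x
  have hquad := hx.fun_mul ((hx.const_mul 2).const_sub 3)
  have hinner := ((hx.const_mul (3 * (n : ℝ) + 2)).fun_mul
    ((hx.const_mul 2).const_sub 1)).const_add (3 * ((n : ℝ) + 1))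
  exact (hquad.fun_mul hinner).congr_deriv (by ring)

theorem hasDerivAt_certificate_mul_cubic_pow (n : ℕ) (x : ℝ) :
    HasDerivAt (fun x => certificate n x * cubic x ^ n)
      (9 * (n + 1) * (2 * n + 1) * cubic x ^ n
        - 2 * (3 * n + 4) * (3 * n + 2) * cubic x ^ (n + 1)) x := by
  refine ((hasDerivAt_certificate n x).fun_mul ((hasDerivAt_cubic x).fun_pow n)).congr_deriv ?_
  -- `n = 0` is separate because of the truncated exponent `n - 1` in the derivative of `fⁿ`.
  rcases n with _ | m
  · simp only [certificate, cubic]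
    push_cast
    ring
  · simp only [certificate, cubic, Nat.add_sub_cancel]
    push_cast
    ring

theorem cubic_neg_one_half : cubic (-1 / 2) = 1 := by norm_num [cubic]

theorem certificate_three_halves (n : ℕ) : certificate n (3 / 2) = 0 := by norm_num [certificate]

theorem certificate_neg_one_half (n : ℕ) : certificate n (-1 / 2) = -2 := by
  norm_num [certificate]
  ring

theorem certificate_mul_cubic_pow_boundary (n : ℕ) :
    certificate n (3 / 2) * cubic (3 / 2) ^ n - certificate n (-1 / 2) * cubic (-1 / 2) ^ n
      = 2 := by
  rw [certificate_three_halves, certificate_neg_one_half, cubic_neg_one_half]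
  ring

end Ruehr

open Ruehr in
theorem ruehr_L_recurrence (L : ℕ → ℝ)
    (hL : ∀ n : ℕ, L n = ∫ x in (-1/2 : ℝ)..(3/2 : ℝ), (3 * x ^ 2 - 2 * x ^ 3) ^ n) :
    ∀ n : ℕ, 9 * ((n : ℝ) + 1) * (2 * (n : ℝ) + 1) * L n
      - 2 * (3 * (n : ℝ) + 4) * (3 * (n : ℝ) + 2) * L (n + 1) = 2 := by
  intro n
  rw [hL, hL]
  exact (const_mul_integral_sub_eq_of_hasDerivAt _ _ (hasDerivAt_certificate_mul_cubic_pow n)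
    (continuous_cubic_pow n) (continuous_cubic_pow (n + 1))).trans
    (certificate_mul_cubic_pow_boundary n)
end

section
/- For every nonnegative integer n, Σ_{j=0}^{2n} (-4)ʲ · C(3n+1, n+j+1) = Σ_{j=0}^{n} 2ʲ · C(3n+1, n-j), where both sides are computed as integers (or rationals). -/
private def Sq (x : ℚ) (N m : ℕ) : ℚ := ∑ k ∈ Finset.range (m + 1), (N.choose k : ℚ) * x ^ k

private lemma Sq_top (x : ℚ) (N m : ℕ) :
    Sq x N (m + 1) = Sq x N m + (N.choose (m + 1) : ℚ) * x ^ (m + 1) := by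
  simp [Sq, Finset.sum_range_succ]

private lemma Sq_pascal (x : ℚ) (N m : ℕ) :
    Sq x (N + 1) (m + 1) = Sq x N (m + 1) + x * Sq x N m := by
  unfold Sq
  rw [Finset.sum_range_succ' (fun k => (((N + 1).choose k : ℚ)) * x ^ k) (m + 1),
      Finset.sum_range_succ' (fun k => ((N.choose k : ℚ)) * x ^ k) (m + 1)]
  have h : ∀ k ∈ Finset.range (m + 1),
      (((N + 1).choose (k + 1) : ℚ)) * x ^ (k + 1)
        = (N.choose (k + 1) : ℚ) * x ^ (k + 1) + x * ((N.choose k : ℚ) * x ^ k) := by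
    intro k _
    rw [Nat.choose_succ_succ]
    push_cast
    ring
  rw [Finset.sum_congr rfl h, Finset.sum_add_distrib, Finset.mul_sum]
  simp
  ring

private lemma Sq_pascal3 (x : ℚ) (N m : ℕ) :
    Sq x (N + 3) (m + 3) = Sq x N (m + 3) + 3 * x * Sq x N (m + 2)
      + 3 * x ^ 2 * Sq x N (m + 1) + x ^ 3 * Sq x N m := by
  have p1 : Sq x (N + 3) (m + 3) = Sq x (N + 2) (m + 3) + x * Sq x (N + 2) (m + 2) :=
    Sq_pascal x (N + 2) (m + 2)
  have p2 : Sq x (N + 2) (m + 3) = Sq x (N + 1) (m + 3) + x * Sq x (N + 1) (m + 2) :=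
    Sq_pascal x (N + 1) (m + 2)
  have p3 : Sq x (N + 2) (m + 2) = Sq x (N + 1) (m + 2) + x * Sq x (N + 1) (m + 1) :=
    Sq_pascal x (N + 1) (m + 1)
  have p4 : Sq x (N + 1) (m + 3) = Sq x N (m + 3) + x * Sq x N (m + 2) :=
    Sq_pascal x N (m + 2)
  have p5 : Sq x (N + 1) (m + 2) = Sq x N (m + 2) + x * Sq x N (m + 1) :=
    Sq_pascal x N (m + 1)
  have p6 : Sq x (N + 1) (m + 1) = Sq x N (m + 1) + x * Sq x N m :=
    Sq_pascal x N m
  rw [p1, p2, p3, p4, p5, p6]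
  ring

private lemma key_choose (n : ℕ) :
    ((3 * n + 7).choose (n + 3) : ℚ) = (3 * n + 7).choose (n + 2) + 2 * (3 * n + 7).choose (n + 1) := by
  have h1 : (3 * n + 7).choose (n + 3) * (n + 3) = (3 * n + 7).choose (n + 2) * (2 * n + 5) := by
    have := Nat.choose_succ_right_eq (3 * n + 7) (n + 2)
    rwa [show 3 * n + 7 - (n + 2) = 2 * n + 5 by omega] at this
  have h2 : (3 * n + 7).choose (n + 2) * (n + 2) = (3 * n + 7).choose (n + 1) * (2 * n + 6) := by
    have := Nat.choose_succ_right_eq (3 * n + 7) (n + 1)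
    rwa [show 3 * n + 7 - (n + 1) = 2 * n + 6 by omega] at this
  have h1' : ((3 * n + 7).choose (n + 3) : ℚ) * (n + 3) = (3 * n + 7).choose (n + 2) * (2 * n + 5) := by
    exact_mod_cast congrArg (Nat.cast : ℕ → ℚ) h1
  have h2' : ((3 * n + 7).choose (n + 2) : ℚ) * (n + 2) = (3 * n + 7).choose (n + 1) * (2 * n + 6) := by
    exact_mod_cast congrArg (Nat.cast : ℕ → ℚ) h2
  have hpos : ((n : ℚ) + 2) * ((n : ℚ) + 3) ≠ 0 := by positivity
  apply mul_left_cancel₀ hpos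
  push_cast at h1' h2' ⊢
  linear_combination ((n : ℚ) + 2) * h1' + ((n : ℚ) + 2) * h2'

private theorem mainQ : ∀ n : ℕ,
    (16 : ℚ) ^ n * Sq (-(1/4)) (3 * n + 1) (2 * n) = 2 ^ n * Sq (1/2) (3 * n + 1) n
  | 0 => by norm_num [Sq]
  | 1 => by norm_num [Sq, Finset.sum_range_succ, Nat.choose]
  | 2 => by norm_num [Sq, Finset.sum_range_succ, Nat.choose]
  | (n + 3) => by
    have IH := mainQ (n + 2)
    rw [show 3 * (n + 2) + 1 = 3 * n + 7 by ring, show 2 * (n + 2) = 2 * n + 4 by ring] at IH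
    set d1 : ℚ := ((3 * n + 7).choose (n + 1) : ℚ) with hd1
    set d2 : ℚ := ((3 * n + 7).choose (n + 2) : ℚ) with hd2
    set d3 : ℚ := ((3 * n + 7).choose (n + 3) : ℚ) with hd3
    have s4 : ((3 * n + 7).choose (2 * n + 4) : ℚ) = d3 := by
      rw [hd3, show 2 * n + 4 = 3 * n + 7 - (n + 3) by omega, Nat.choose_symm (by omega)]
    have s5 : ((3 * n + 7).choose (2 * n + 5) : ℚ) = d2 := by
      rw [hd2, show 2 * n + 5 = 3 * n + 7 - (n + 2) by omega, Nat.choose_symm (by omega)]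
    have s6 : ((3 * n + 7).choose (2 * n + 6) : ℚ) = d1 := by
      rw [hd1, show 2 * n + 6 = 3 * n + 7 - (n + 1) by omega, Nat.choose_symm (by omega)]
    have hx4 : Sq (-(1/4)) (3 * n + 7) (2 * n + 4)
        = Sq (-(1/4)) (3 * n + 7) (2 * n + 3) + d3 * (-(1/4) : ℚ) ^ (2 * n + 4) := by
      rw [← s4]; exact Sq_top (-(1/4)) (3 * n + 7) (2 * n + 3)
    have hx5 : Sq (-(1/4)) (3 * n + 7) (2 * n + 5)
        = Sq (-(1/4)) (3 * n + 7) (2 * n + 4) + d2 * (-(1/4) : ℚ) ^ (2 * n + 5) := by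
      rw [← s5]; exact Sq_top (-(1/4)) (3 * n + 7) (2 * n + 4)
    have hx6 : Sq (-(1/4)) (3 * n + 7) (2 * n + 6)
        = Sq (-(1/4)) (3 * n + 7) (2 * n + 5) + d1 * (-(1/4) : ℚ) ^ (2 * n + 6) := by
      rw [← s6]; exact Sq_top (-(1/4)) (3 * n + 7) (2 * n + 5)
    have hy1 : Sq (1/2) (3 * n + 7) (n + 1)
        = Sq (1/2) (3 * n + 7) n + d1 * (1/2 : ℚ) ^ (n + 1) := by
      rw [hd1]; exact Sq_top (1/2) (3 * n + 7) n
    have hy2 : Sq (1/2) (3 * n + 7) (n + 2)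
        = Sq (1/2) (3 * n + 7) (n + 1) + d2 * (1/2 : ℚ) ^ (n + 2) := by
      rw [hd2]; exact Sq_top (1/2) (3 * n + 7) (n + 1)
    have hy3 : Sq (1/2) (3 * n + 7) (n + 3)
        = Sq (1/2) (3 * n + 7) (n + 2) + d3 * (1/2 : ℚ) ^ (n + 3) := by
      rw [hd3]; exact Sq_top (1/2) (3 * n + 7) (n + 2)
    have hPne : (16 : ℚ) ^ n ≠ 0 := by positivity
    have hQne : (2 : ℚ) ^ n ≠ 0 := by positivity
    have hP1 : (16 : ℚ) ^ n * ((16 : ℚ) ^ n)⁻¹ = 1 := mul_inv_cancel₀ hPne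
    have hQ1 : (2 : ℚ) ^ n * ((2 : ℚ) ^ n)⁻¹ = 1 := mul_inv_cancel₀ hQne
    have px : ∀ k : ℕ, (-(1/4) : ℚ) ^ (2 * n + k) = ((16 : ℚ) ^ n)⁻¹ * (-(1/4) : ℚ) ^ k := by
      intro k
      rw [pow_add, pow_mul]
      norm_num
      rw [one_div, inv_pow]
    have py : ∀ k : ℕ, (1/2 : ℚ) ^ (n + k) = ((2 : ℚ) ^ n)⁻¹ * (1/2 : ℚ) ^ k := by
      intro k
      rw [pow_add]
      norm_num
      rw [one_div, inv_pow]
    have IH2 : 256 * (16 : ℚ) ^ n * Sq (-(1/4)) (3 * n + 7) (2 * n + 3) + d3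
        = 4 * 2 ^ n * Sq (1/2) (3 * n + 7) n + 2 * d1 + d2 := by
      rw [hx4, hy2, hy1, px 4, py 2, py 1, pow_add, pow_add] at IH
      linear_combination IH - d3 * hP1 + (2 * d1 + d2) * hQ1
    have gl : (16 : ℚ) ^ (n + 3) * Sq (-(1/4)) (3 * n + 7 + 3) (2 * n + 3 + 3)
        = 1728 * 16 ^ n * Sq (-(1/4)) (3 * n + 7) (2 * n + 3) + (d1 - d2 + 7 * d3) := by
      rw [Sq_pascal3 (-(1/4)) (3 * n + 7) (2 * n + 3)]
      rw [show (2 * n + 3 + 3 : ℕ) = 2 * n + 6 by omega,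
          show (2 * n + 3 + 2 : ℕ) = 2 * n + 5 by omega,
          show (2 * n + 3 + 1 : ℕ) = 2 * n + 4 by omega]
      rw [hx6, hx5, hx4, px 4, px 5, px 6, pow_add]
      linear_combination (d1 - d2 + 7 * d3) * hP1
    have gr : (2 : ℚ) ^ (n + 3) * Sq (1/2) (3 * n + 7 + 3) (n + 3)
        = 27 * 2 ^ n * Sq (1/2) (3 * n + 7) n + (13 * d1 + 5 * d2 + d3) := by
      rw [Sq_pascal3 (1/2) (3 * n + 7) n]
      rw [hy3, hy2, hy1, py 1, py 2, py 3, pow_add]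
      linear_combination (13 * d1 + 5 * d2 + d3) * hQ1
    rw [show 3 * (n + 3) + 1 = 3 * n + 7 + 3 by ring, show 2 * (n + 3) = 2 * n + 3 + 3 by ring]
    rw [gl, gr]
    have key := key_choose n
    rw [← hd1, ← hd2, ← hd3] at key
    linear_combination (27 : ℚ) / 4 * IH2 - (3 : ℚ) / 4 * key

private lemma L_eq (n : ℕ) :
    ∑ j ∈ Finset.range (2 * n + 1), (-4 : ℚ) ^ j * ((3 * n + 1).choose (n + j + 1) : ℚ)
      = 16 ^ n * Sq (-(1/4)) (3 * n + 1) (2 * n) := by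
  rw [Sq, Finset.mul_sum, ← Finset.sum_range_reflect]
  apply Finset.sum_congr rfl
  intro j hj
  rw [Finset.mem_range] at hj
  rw [show 2 * n + 1 - 1 - j = 2 * n - j by omega,
      show n + (2 * n - j) + 1 = 3 * n + 1 - j by omega,
      Nat.choose_symm (show j ≤ 3 * n + 1 by omega)]
  have h3 : (-4 : ℚ) ^ (2 * n - j) = 16 ^ n * (-(1/4) : ℚ) ^ j := by
    have h4 : ((-4 : ℚ)) ^ (2 * n - j) * (-4 : ℚ) ^ j = 16 ^ n := by
      rw [← pow_add, show 2 * n - j + j = 2 * n by omega, pow_mul]; norm_num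
    rw [show (-(1/4) : ℚ) = ((-4 : ℚ))⁻¹ by norm_num, inv_pow, ← h4]
    field_simp
  linear_combination (((3 * n + 1).choose j : ℚ)) * h3

private lemma R_eq (n : ℕ) :
    ∑ j ∈ Finset.range (n + 1), (2 : ℚ) ^ j * ((3 * n + 1).choose (n - j) : ℚ)
      = 2 ^ n * Sq (1/2) (3 * n + 1) n := by
  rw [Sq, Finset.mul_sum, ← Finset.sum_range_reflect]
  apply Finset.sum_congr rfl
  intro j hj
  rw [Finset.mem_range] at hj
  rw [show n + 1 - 1 - j = n - j by omega, show n - (n - j) = j by omega]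
  have h3 : (2 : ℚ) ^ (n - j) = 2 ^ n * (1/2 : ℚ) ^ j := by
    have h4 : ((2 : ℚ)) ^ (n - j) * (2 : ℚ) ^ j = 2 ^ n := by
      rw [← pow_add, show n - j + j = n by omega]
    rw [show (1/2 : ℚ) = ((2 : ℚ))⁻¹ by norm_num, inv_pow, ← h4]
    field_simp
  linear_combination (((3 * n + 1).choose j : ℚ)) * h3

theorem ruehr_binomial_one (n : ℕ) :
    ∑ j ∈ Finset.range (2 * n + 1), (-4 : ℤ) ^ j * (Nat.choose (3 * n + 1) (n + j + 1) : ℤ) =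
      ∑ j ∈ Finset.range (n + 1), (2 : ℤ) ^ j * (Nat.choose (3 * n + 1) (n - j) : ℤ) := by
  have h := mainQ n
  rw [← L_eq, ← R_eq] at h
  exact_mod_cast h
end

section
/- For every nonnegative integer n, Σ_{j=0}^{2n} (-3)ʲ · C(3n-j, n) = Σ_{j=0}^{n} 3ʲ · C(3n-j, 2n), where both sides are computed as integers. -/
open Finset

-- hockey / Vandermonde on upper index
lemma hockey (k : ℕ) : ∀ (m : ℕ), ∀ (i : ℕ),
    ∑ j ∈ range (m+1), Nat.choose j i * Nat.choose (m-j) k = Nat.choose (m+1) (i+k+1) := by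
  intro m
  induction m with
  | zero =>
      intro i
      rcases i with _ | i
      · rcases k with _ | k <;> simp [Nat.choose]
      · simp [Nat.choose]
        exact (Nat.choose_eq_zero_of_lt (by omega)).symm
  | succ m ih =>
      intro i
      rw [Finset.sum_range_succ']
      have hsub : ∀ j : ℕ, m + 1 - (j+1) = m - j := fun j => by omega
      cases i with
      | zero =>
          have hterm : ∀ j ∈ range (m+1), Nat.choose (j+1) 0 * Nat.choose (m+1-(j+1)) k
              = Nat.choose j 0 * Nat.choose (m-j) k := by
            intro j _; rw [hsub, Nat.choose_zero_right, Nat.choose_zero_right]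
          rw [Finset.sum_congr rfl hterm, ih 0]
          have h1 : Nat.choose (m+1+1) (k+1) = Nat.choose (m+1) k + Nat.choose (m+1) (k+1) :=
            Nat.choose_succ_succ (m+1) k
          simp only [Nat.choose_zero_right, Nat.sub_zero, one_mul, zero_add] at *
          omega
      | succ i =>
          have hterm : ∀ j ∈ range (m+1), Nat.choose (j+1) (i+1) * Nat.choose (m+1-(j+1)) k
              = Nat.choose j i * Nat.choose (m-j) k + Nat.choose j (i+1) * Nat.choose (m-j) k := by
            intro j _; rw [hsub, Nat.choose_succ_succ, add_mul]
          rw [Finset.sum_congr rfl hterm, Finset.sum_add_distrib, ih i, ih (i+1)]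
          have h1 : Nat.choose (m+1+1) (i+k+1+1) = Nat.choose (m+1) (i+k+1) + Nat.choose (m+1) (i+k+1+1) :=
            Nat.choose_succ_succ (m+1) (i+k+1)
          have h2 : Nat.choose 0 (i+1) = 0 := Nat.choose_eq_zero_of_lt (by omega)
          rw [h2, show i+1+k+1 = i+k+1+1 from by omega]
          omega

-- generic transform: ∑_j (x+1)^j C(3n-j, c) over range (M+1)  =  ∑_i x^i C(3n+1, i+c+1)
-- where terms C(3n-j,c) vanish for j > M (i.e. M chosen so that 3n - j < c there).
lemma transform (n M c : ℕ) (x : ℤ) (hM : M ≤ 3*n) (hv : ∀ j, M < j → j ≤ 3*n → 3*n - j < c) :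
    ∑ j ∈ range (M+1), (x+1)^j * (Nat.choose (3*n-j) c : ℤ)
      = ∑ i ∈ range (M+1), x^i * (Nat.choose (3*n+1) (i+c+1) : ℤ) := by
  have hpow : ∀ j ∈ range (M+1), (x+1)^j * (Nat.choose (3*n-j) c : ℤ)
      = ∑ i ∈ range (M+1), x^i * (Nat.choose j i : ℤ) * (Nat.choose (3*n-j) c : ℤ) := by
    intro j hj
    rw [add_pow]
    simp only [one_pow, mul_one]
    rw [← Finset.sum_mul]
    congr 1
    apply Finset.sum_subset
    · exact Finset.range_subset_range.mpr (by simp at hj; omega)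
    · intro i _ hi
      simp at hi
      simp only [Finset.mem_range] at hj
      rw [Nat.choose_eq_zero_of_lt (by omega)]
      simp
  rw [Finset.sum_congr rfl hpow, Finset.sum_comm]
  refine Finset.sum_congr rfl fun i hi => ?_
  rw [Finset.sum_congr rfl (fun j _ => mul_assoc (x^i) ((Nat.choose j i : ℤ)) ((Nat.choose (3*n-j) c : ℤ))), ← Finset.mul_sum]
  congr 1
  have hext : ∑ j ∈ range (M+1), (Nat.choose j i : ℤ) * (Nat.choose (3*n-j) c : ℤ)
      = ∑ j ∈ range (3*n+1), (Nat.choose j i : ℤ) * (Nat.choose (3*n-j) c : ℤ) := by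
    apply Finset.sum_subset
    · exact Finset.range_subset_range.mpr (by omega)
    · intro j hj1 hj2
      simp only [Finset.mem_range] at hj1 hj2
      rw [Nat.choose_eq_zero_of_lt (hv j (by omega) (by omega))]
      simp
  rw [hext]
  push_cast [← hockey c (3*n) i]
  rfl

lemma sum_shiftc (x : ℤ) (N t M : ℕ) :
    ∑ i ∈ range (M+1), x^i * (Nat.choose N (t+i) : ℤ)
      = (Nat.choose N t : ℤ) + x * ∑ i ∈ range M, x^i * (Nat.choose N (t+1+i) : ℤ) := by
  rw [Finset.sum_range_succ']
  have h1 : ∀ i ∈ range M, x^(i+1) * (Nat.choose N (t+(i+1)) : ℤ)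
      = x * (x^i * (Nat.choose N (t+1+i):ℤ)) := by
    intro i _
    rw [show t+(i+1) = t+1+i from by omega]
    ring
  rw [Finset.sum_congr rfl h1, ← Finset.mul_sum, pow_zero, one_mul, add_comm]
  norm_num

lemma sum_pascal (x : ℤ) (m t M : ℕ) :
    ∑ i ∈ range M, x^i * (Nat.choose (m+1) (t+1+i) : ℤ)
      = (∑ i ∈ range M, x^i * (Nat.choose m (t+i):ℤ))
        + ∑ i ∈ range M, x^i * (Nat.choose m (t+1+i):ℤ) := by
  rw [← Finset.sum_add_distrib]
  refine Finset.sum_congr rfl fun i _ => ?_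
  rw [show t+1+i = (t+i)+1 from by omega, Nat.choose_succ_succ]
  push_cast
  ring

lemma recL (n : ℕ) :
    4 * (∑ i ∈ range (2*n+3), (-4:ℤ)^i * (Nat.choose (3*n+4) (n+2+i) : ℤ))
      = 27 * (∑ i ∈ range (2*n+1), (-4:ℤ)^i * (Nat.choose (3*n+1) (n+1+i):ℤ))
        + (4*(Nat.choose (3*n+2) n:ℤ) - 8*(Nat.choose (3*n+1) n:ℤ)
           + (Nat.choose (3*n+1) (n+1):ℤ)) := by
  have z : ∀ s : ℕ, 3*n+1 < s → (Nat.choose (3*n+1) s : ℤ) = 0 := fun s hs => by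
    simp [Nat.choose_eq_zero_of_lt hs]
  set L := ∑ i ∈ range (2*n+1), (-4:ℤ)^i * (Nat.choose (3*n+1) (n+1+i):ℤ) with hLdef
  -- truncated sum at n+1 over range (2n+2) equals L
  have hT1 : ∑ i ∈ range (2*n+2), (-4:ℤ)^i * (Nat.choose (3*n+1) (n+1+i):ℤ) = L := by
    rw [show 2*n+2 = (2*n+1)+1 from by omega, Finset.sum_range_succ,
      z (n+1+(2*n+1)) (by omega)]
    ring
  -- W0 (n+1) = L
  have hW01 : ∑ i ∈ range (2*n+3), (-4:ℤ)^i * (Nat.choose (3*n+1) (n+1+i):ℤ) = L := by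
    rw [show 2*n+3 = (2*n+2)+1 from by omega, Finset.sum_range_succ,
      z (n+1+(2*n+2)) (by omega), hT1]
    ring
  -- W0 n = c n - 4L
  have hW0n : ∑ i ∈ range (2*n+3), (-4:ℤ)^i * (Nat.choose (3*n+1) (n+i):ℤ)
      = (Nat.choose (3*n+1) n : ℤ) - 4*L := by
    rw [show 2*n+3 = (2*n+2)+1 from by omega, sum_shiftc, hT1]
    ring
  -- 4 * W0 (n+2) = c (n+1) - L
  have hW02 : 4 * (∑ i ∈ range (2*n+3), (-4:ℤ)^i * (Nat.choose (3*n+1) (n+2+i):ℤ))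
      = (Nat.choose (3*n+1) (n+1) : ℤ) - L := by
    have h1 : L = (Nat.choose (3*n+1) (n+1) : ℤ)
        + (-4) * ∑ i ∈ range (2*n+2), (-4:ℤ)^i * (Nat.choose (3*n+1) (n+1+1+i):ℤ) := by
      rw [← hW01, show 2*n+3 = (2*n+2)+1 from by omega, sum_shiftc]
    have h2 : ∑ i ∈ range (2*n+3), (-4:ℤ)^i * (Nat.choose (3*n+1) (n+2+i):ℤ)
        = ∑ i ∈ range (2*n+2), (-4:ℤ)^i * (Nat.choose (3*n+1) (n+1+1+i):ℤ) := by
      rw [show 2*n+3 = (2*n+2)+1 from by omega, Finset.sum_range_succ,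
        z (n+2+(2*n+2)) (by omega)]
      simp only [show ∀ i:ℕ, n+1+1+i = n+2+i from fun i => by omega]
      ring
    rw [h2]
    linarith [h1]
  -- W1 n = C(3n+2,n) - 4*W0 n - 4*L
  have hW1n : ∑ i ∈ range (2*n+3), (-4:ℤ)^i * (Nat.choose (3*n+2) (n+i):ℤ)
      = (Nat.choose (3*n+2) n : ℤ)
        - 4*(∑ i ∈ range (2*n+3), (-4:ℤ)^i * (Nat.choose (3*n+1) (n+i):ℤ)) - 4*L := by
    rw [show 2*n+3 = (2*n+2)+1 from by omega, sum_shiftc]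
    have hp := sum_pascal (-4) (3*n+1) n (2*n+2)
    rw [show (3*n+1)+1 = 3*n+2 from by omega] at hp
    rw [hp, hT1]
    have htr : ∑ i ∈ range ((2*n+2)+1), (-4:ℤ)^i * (Nat.choose (3*n+1) (n+i):ℤ)
        = ∑ i ∈ range (2*n+2), (-4:ℤ)^i * (Nat.choose (3*n+1) (n+i):ℤ) := by
      rw [Finset.sum_range_succ, z (n+(2*n+2)) (by omega)]
      ring
    rw [htr]
    ring
  -- Pascal expansions at tops 3n+2, 3n+3, 3n+4 over range (2n+3)
  have hP1 : ∑ i ∈ range (2*n+3), (-4:ℤ)^i * (Nat.choose (3*n+2) (n+1+i):ℤ)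
      = (∑ i ∈ range (2*n+3), (-4:ℤ)^i * (Nat.choose (3*n+1) (n+i):ℤ))
        + ∑ i ∈ range (2*n+3), (-4:ℤ)^i * (Nat.choose (3*n+1) (n+1+i):ℤ) := by
    have h := sum_pascal (-4) (3*n+1) n (2*n+3)
    rw [show (3*n+1)+1 = 3*n+2 from by omega] at h
    exact h
  have hP2 : ∑ i ∈ range (2*n+3), (-4:ℤ)^i * (Nat.choose (3*n+2) (n+2+i):ℤ)
      = (∑ i ∈ range (2*n+3), (-4:ℤ)^i * (Nat.choose (3*n+1) (n+1+i):ℤ))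
        + ∑ i ∈ range (2*n+3), (-4:ℤ)^i * (Nat.choose (3*n+1) (n+2+i):ℤ) := by
    have h := sum_pascal (-4) (3*n+1) (n+1) (2*n+3)
    rw [show (3*n+1)+1 = 3*n+2 from by omega] at h
    simp only [show ∀ i:ℕ, n+1+1+i = n+2+i from fun i => by omega] at h
    exact h
  have hQ1 : ∑ i ∈ range (2*n+3), (-4:ℤ)^i * (Nat.choose (3*n+3) (n+1+i):ℤ)
      = (∑ i ∈ range (2*n+3), (-4:ℤ)^i * (Nat.choose (3*n+2) (n+i):ℤ))
        + ∑ i ∈ range (2*n+3), (-4:ℤ)^i * (Nat.choose (3*n+2) (n+1+i):ℤ) := by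
    have h := sum_pascal (-4) (3*n+2) n (2*n+3)
    rw [show (3*n+2)+1 = 3*n+3 from by omega] at h
    exact h
  have hQ2 : ∑ i ∈ range (2*n+3), (-4:ℤ)^i * (Nat.choose (3*n+3) (n+2+i):ℤ)
      = (∑ i ∈ range (2*n+3), (-4:ℤ)^i * (Nat.choose (3*n+2) (n+1+i):ℤ))
        + ∑ i ∈ range (2*n+3), (-4:ℤ)^i * (Nat.choose (3*n+2) (n+2+i):ℤ) := by
    have h := sum_pascal (-4) (3*n+2) (n+1) (2*n+3)
    rw [show (3*n+2)+1 = 3*n+3 from by omega] at h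
    simp only [show ∀ i:ℕ, n+1+1+i = n+2+i from fun i => by omega] at h
    exact h
  have hR : ∑ i ∈ range (2*n+3), (-4:ℤ)^i * (Nat.choose (3*n+4) (n+2+i):ℤ)
      = (∑ i ∈ range (2*n+3), (-4:ℤ)^i * (Nat.choose (3*n+3) (n+1+i):ℤ))
        + ∑ i ∈ range (2*n+3), (-4:ℤ)^i * (Nat.choose (3*n+3) (n+2+i):ℤ) := by
    have h := sum_pascal (-4) (3*n+3) (n+1) (2*n+3)
    rw [show (3*n+3)+1 = 3*n+4 from by omega] at h
    simp only [show ∀ i:ℕ, n+1+1+i = n+2+i from fun i => by omega] at h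
    exact h
  rw [hR, hQ1, hQ2, hP1, hP2, hW1n, hW01]
  linarith [hW0n, hW02]

lemma recR (n : ℕ) :
    4 * (∑ i ∈ range (n+2), (2:ℤ)^i * (Nat.choose (3*n+4) (2*n+3+i) : ℤ))
      = 27 * (∑ i ∈ range (n+1), (2:ℤ)^i * (Nat.choose (3*n+1) (2*n+1+i):ℤ))
        + (4*(Nat.choose (3*n+1) (2*n):ℤ) - 7*(Nat.choose (3*n+1) (2*n+1):ℤ)
           - 2*(Nat.choose (3*n+1) (2*n+2):ℤ)) := by
  have z : ∀ s : ℕ, 3*n+1 < s → (Nat.choose (3*n+1) s : ℤ) = 0 := fun s hs => by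
    simp [Nat.choose_eq_zero_of_lt hs]
  set R := ∑ i ∈ range (n+1), (2:ℤ)^i * (Nat.choose (3*n+1) (2*n+1+i):ℤ) with hRdef
  -- V0 (2n+1) = R
  have hV01 : ∑ i ∈ range (n+2), (2:ℤ)^i * (Nat.choose (3*n+1) (2*n+1+i):ℤ) = R := by
    rw [show n+2 = (n+1)+1 from by omega, Finset.sum_range_succ,
      z (2*n+1+(n+1)) (by omega)]
    ring
  -- V0 (2n) = c 2n + 2R
  have hV00 : ∑ i ∈ range (n+2), (2:ℤ)^i * (Nat.choose (3*n+1) (2*n+i):ℤ)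
      = (Nat.choose (3*n+1) (2*n) : ℤ) + 2*R := by
    rw [show n+2 = (n+1)+1 from by omega, sum_shiftc]
  -- 2 * V0 (2n+2) = R - c (2n+1)
  have hV02 : 2 * (∑ i ∈ range (n+2), (2:ℤ)^i * (Nat.choose (3*n+1) (2*n+2+i):ℤ))
      = R - (Nat.choose (3*n+1) (2*n+1) : ℤ) := by
    have h1 : R = (Nat.choose (3*n+1) (2*n+1) : ℤ)
        + 2 * ∑ i ∈ range (n+1), (2:ℤ)^i * (Nat.choose (3*n+1) (2*n+1+1+i):ℤ) := by
      rw [← hV01, show n+2 = (n+1)+1 from by omega, sum_shiftc]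
    have h2 : ∑ i ∈ range (n+2), (2:ℤ)^i * (Nat.choose (3*n+1) (2*n+2+i):ℤ)
        = ∑ i ∈ range (n+1), (2:ℤ)^i * (Nat.choose (3*n+1) (2*n+1+1+i):ℤ) := by
      rw [show n+2 = (n+1)+1 from by omega, Finset.sum_range_succ,
        z (2*n+2+(n+1)) (by omega)]
      simp only [show ∀ i:ℕ, 2*n+1+1+i = 2*n+2+i from fun i => by omega]
      ring
    rw [h2]
    linarith [h1]
  -- 4 * V0 (2n+3) = R - c (2n+1) - 2 c (2n+2)
  have hV03 : 4 * (∑ i ∈ range (n+2), (2:ℤ)^i * (Nat.choose (3*n+1) (2*n+3+i):ℤ))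
      = R - (Nat.choose (3*n+1) (2*n+1) : ℤ) - 2*(Nat.choose (3*n+1) (2*n+2) : ℤ) := by
    have h1 : ∑ i ∈ range (n+2), (2:ℤ)^i * (Nat.choose (3*n+1) (2*n+2+i):ℤ)
        = (Nat.choose (3*n+1) (2*n+2) : ℤ)
          + 2 * ∑ i ∈ range (n+1), (2:ℤ)^i * (Nat.choose (3*n+1) (2*n+2+1+i):ℤ) := by
      rw [show n+2 = (n+1)+1 from by omega, sum_shiftc]
    have h2 : ∑ i ∈ range (n+2), (2:ℤ)^i * (Nat.choose (3*n+1) (2*n+3+i):ℤ)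
        = ∑ i ∈ range (n+1), (2:ℤ)^i * (Nat.choose (3*n+1) (2*n+2+1+i):ℤ) := by
      rw [show n+2 = (n+1)+1 from by omega, Finset.sum_range_succ,
        z (2*n+3+(n+1)) (by omega)]
      simp only [show ∀ i:ℕ, 2*n+2+1+i = 2*n+3+i from fun i => by omega]
      ring
    rw [h2]
    linarith [h1, hV02]
  -- Pascal expansions
  have hP1 : ∑ i ∈ range (n+2), (2:ℤ)^i * (Nat.choose (3*n+2) (2*n+1+i):ℤ)
      = (∑ i ∈ range (n+2), (2:ℤ)^i * (Nat.choose (3*n+1) (2*n+i):ℤ))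
        + ∑ i ∈ range (n+2), (2:ℤ)^i * (Nat.choose (3*n+1) (2*n+1+i):ℤ) := by
    have h := sum_pascal 2 (3*n+1) (2*n) (n+2)
    rw [show (3*n+1)+1 = 3*n+2 from by omega] at h
    exact h
  have hP2 : ∑ i ∈ range (n+2), (2:ℤ)^i * (Nat.choose (3*n+2) (2*n+2+i):ℤ)
      = (∑ i ∈ range (n+2), (2:ℤ)^i * (Nat.choose (3*n+1) (2*n+1+i):ℤ))
        + ∑ i ∈ range (n+2), (2:ℤ)^i * (Nat.choose (3*n+1) (2*n+2+i):ℤ) := by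
    have h := sum_pascal 2 (3*n+1) (2*n+1) (n+2)
    rw [show (3*n+1)+1 = 3*n+2 from by omega] at h
    simp only [show ∀ i:ℕ, 2*n+1+1+i = 2*n+2+i from fun i => by omega] at h
    exact h
  have hP3 : ∑ i ∈ range (n+2), (2:ℤ)^i * (Nat.choose (3*n+2) (2*n+3+i):ℤ)
      = (∑ i ∈ range (n+2), (2:ℤ)^i * (Nat.choose (3*n+1) (2*n+2+i):ℤ))
        + ∑ i ∈ range (n+2), (2:ℤ)^i * (Nat.choose (3*n+1) (2*n+3+i):ℤ) := by
    have h := sum_pascal 2 (3*n+1) (2*n+2) (n+2)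
    rw [show (3*n+1)+1 = 3*n+2 from by omega] at h
    simp only [show ∀ i:ℕ, 2*n+2+1+i = 2*n+3+i from fun i => by omega] at h
    exact h
  have hQ1 : ∑ i ∈ range (n+2), (2:ℤ)^i * (Nat.choose (3*n+3) (2*n+2+i):ℤ)
      = (∑ i ∈ range (n+2), (2:ℤ)^i * (Nat.choose (3*n+2) (2*n+1+i):ℤ))
        + ∑ i ∈ range (n+2), (2:ℤ)^i * (Nat.choose (3*n+2) (2*n+2+i):ℤ) := by
    have h := sum_pascal 2 (3*n+2) (2*n+1) (n+2)
    rw [show (3*n+2)+1 = 3*n+3 from by omega] at h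
    simp only [show ∀ i:ℕ, 2*n+1+1+i = 2*n+2+i from fun i => by omega] at h
    exact h
  have hQ2 : ∑ i ∈ range (n+2), (2:ℤ)^i * (Nat.choose (3*n+3) (2*n+3+i):ℤ)
      = (∑ i ∈ range (n+2), (2:ℤ)^i * (Nat.choose (3*n+2) (2*n+2+i):ℤ))
        + ∑ i ∈ range (n+2), (2:ℤ)^i * (Nat.choose (3*n+2) (2*n+3+i):ℤ) := by
    have h := sum_pascal 2 (3*n+2) (2*n+2) (n+2)
    rw [show (3*n+2)+1 = 3*n+3 from by omega] at h
    simp only [show ∀ i:ℕ, 2*n+2+1+i = 2*n+3+i from fun i => by omega] at h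
    exact h
  have hR : ∑ i ∈ range (n+2), (2:ℤ)^i * (Nat.choose (3*n+4) (2*n+3+i):ℤ)
      = (∑ i ∈ range (n+2), (2:ℤ)^i * (Nat.choose (3*n+3) (2*n+2+i):ℤ))
        + ∑ i ∈ range (n+2), (2:ℤ)^i * (Nat.choose (3*n+3) (2*n+3+i):ℤ) := by
    have h := sum_pascal 2 (3*n+3) (2*n+2) (n+2)
    rw [show (3*n+3)+1 = 3*n+4 from by omega] at h
    simp only [show ∀ i:ℕ, 2*n+2+1+i = 2*n+3+i from fun i => by omega] at h
    exact h
  rw [hR, hQ1, hQ2, hP1, hP2, hP3, hV01]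
  linarith [hV00, hV02, hV03]

-- F4: C(3n+1,n+1) = C(3n+1,n) + 2*C(3n+1,2n+2)
lemma auxF4 (n : ℕ) : Nat.choose (3*n+1) (n+1)
    = Nat.choose (3*n+1) n + 2 * Nat.choose (3*n+1) (2*n+2) := by
  have h1 := Nat.choose_succ_right_eq (3*n+1) n
  rw [show 3*n+1-n = 2*n+1 from by omega] at h1
  have h2 := Nat.choose_succ_right_eq (3*n+1) (2*n+1)
  rw [show 3*n+1-(2*n+1) = n from by omega] at h2
  have hsymm : Nat.choose (3*n+1) (2*n+1) = Nat.choose (3*n+1) n := by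
    have := Nat.choose_symm (show n ≤ 3*n+1 by omega)
    rw [show 3*n+1-n = 2*n+1 from by omega] at this
    exact this
  rw [hsymm] at h2
  set a := Nat.choose (3*n+1) n
  set b := Nat.choose (3*n+1) (n+1)
  set d := Nat.choose (3*n+1) (2*n+2)
  have key : (b:ℤ) * (2*((n:ℤ)+1)^2) = ((a:ℤ) + 2*d) * (2*((n:ℤ)+1)^2) := by
    have h1' : (b:ℤ) * ((n:ℤ)+1) = (a:ℤ) * (2*(n:ℤ)+1) := by exact_mod_cast h1
    have h2' : (d:ℤ) * (2*(n:ℤ)+2) = (a:ℤ) * (n:ℤ) := by exact_mod_cast h2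
    linear_combination (2*(n:ℤ)+2) * h1' - (2*(n:ℤ)+2) * h2'
  have hb : (b:ℤ) = (a:ℤ) + 2*d :=
    mul_right_cancel₀ (by positivity) key
  exact_mod_cast hb

lemma auxF1 (n : ℕ) : Nat.choose (3*n+1) (2*n) = Nat.choose (3*n+1) (n+1) := by
  have := Nat.choose_symm (show n+1 ≤ 3*n+1 by omega)
  rw [show 3*n+1-(n+1) = 2*n from by omega] at this
  exact this

lemma auxF2 (n : ℕ) : Nat.choose (3*n+1) (2*n+1) = Nat.choose (3*n+1) n := by
  have := Nat.choose_symm (show n ≤ 3*n+1 by omega)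
  rw [show 3*n+1-n = 2*n+1 from by omega] at this
  exact this

lemma auxF3 (n : ℕ) : Nat.choose (3*n+2) n
    = Nat.choose (3*n+1) n + Nat.choose (3*n+1) (2*n+2) := by
  have hs : Nat.choose (3*n+2) (2*n+2) = Nat.choose (3*n+2) n := by
    have := Nat.choose_symm (show n ≤ 3*n+2 by omega)
    rw [show 3*n+2-n = 2*n+2 from by omega] at this
    exact this
  have hp : Nat.choose (3*n+2) (2*n+2) = Nat.choose (3*n+1) (2*n+1) + Nat.choose (3*n+1) (2*n+2) := by
    have := Nat.choose_succ_succ (3*n+1) (2*n+1)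
    simpa [Nat.succ_eq_add_one, show 3*n+1+1 = 3*n+2 from by omega,
      show 2*n+1+1 = 2*n+2 from by omega] using this
  rw [← hs, hp, auxF2]

lemma key_identity : ∀ n : ℕ,
    ∑ i ∈ range (2*n+1), (-4:ℤ)^i * (Nat.choose (3*n+1) (n+1+i):ℤ)
      = ∑ i ∈ range (n+1), (2:ℤ)^i * (Nat.choose (3*n+1) (2*n+1+i):ℤ) := by
  intro n
  induction n with
  | zero => norm_num
  | succ n ih =>
      simp only [show 2*(n+1)+1 = 2*n+3 from by omega, show 3*(n+1)+1 = 3*n+4 from by omega,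
        show (n:ℕ)+1+1 = n+2 from by omega,
        show ∀ i:ℕ, n+1+1+i = n+2+i from fun i => by omega,
        show ∀ i:ℕ, 2*(n+1)+1+i = 2*n+3+i from fun i => by omega]
      apply mul_left_cancel₀ (show (4:ℤ) ≠ 0 by norm_num)
      rw [recL n, recR n, ih]
      have f1 : (Nat.choose (3*n+1) (2*n) : ℤ) = (Nat.choose (3*n+1) (n+1) : ℤ) := by
        exact_mod_cast auxF1 n
      have f2 : (Nat.choose (3*n+1) (2*n+1) : ℤ) = (Nat.choose (3*n+1) n : ℤ) := by
        exact_mod_cast auxF2 n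
      have f3 : (Nat.choose (3*n+2) n : ℤ)
          = (Nat.choose (3*n+1) n : ℤ) + (Nat.choose (3*n+1) (2*n+2) : ℤ) := by
        exact_mod_cast auxF3 n
      have f4 : (Nat.choose (3*n+1) (n+1) : ℤ)
          = (Nat.choose (3*n+1) n : ℤ) + 2*(Nat.choose (3*n+1) (2*n+2) : ℤ) := by
        exact_mod_cast auxF4 n
      linarith

theorem ruehr_binomial_two (n : ℕ) :
    ∑ j ∈ Finset.range (2 * n + 1), (-3 : ℤ) ^ j * (Nat.choose (3 * n - j) n : ℤ) =
      ∑ j ∈ Finset.range (n + 1), (3 : ℤ) ^ j * (Nat.choose (3 * n - j) (2 * n) : ℤ) := by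
  rw [show (-3 : ℤ) = -4 + 1 from by norm_num,
    transform n (2*n) n (-4) (by omega) (fun j h1 h2 => by omega)]
  rw [show (3 : ℤ) = 2 + 1 from by norm_num,
    transform n n (2*n) 2 (by omega) (fun j h1 h2 => by omega)]
  simp only [show ∀ i:ℕ, i+n+1 = n+1+i from fun i => by omega,
    show ∀ i:ℕ, i+2*n+1 = 2*n+1+i from fun i => by omega]
  exact key_identity n
end

section
/- For every nonnegative integer n, Σ_{j=0}^{2n} (-4)ʲ · C(3n+1, n+j+1) = Σ_{j=0}^{2n} (-3)ʲ · C(3n-j, n), where both sides are computed as integers. -/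
open Polynomial Finset

theorem ruehr_sums_equal_left (n : ℕ) :
    ∑ j ∈ Finset.range (2 * n + 1), (-4 : ℤ) ^ j * (Nat.choose (3 * n + 1) (n + j + 1) : ℤ) =
      ∑ j ∈ Finset.range (2 * n + 1), (-3 : ℤ) ^ j * (Nat.choose (3 * n - j) n : ℤ) := by
  -- Step 0: rewrite binomials by symmetry
  have hL : ∀ j ∈ Finset.range (2 * n + 1),
      (-4 : ℤ) ^ j * (Nat.choose (3 * n + 1) (n + j + 1) : ℤ)
        = (-4 : ℤ) ^ j * (Nat.choose (3 * n + 1) (2 * n - j) : ℤ) := by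
    intro j hj
    rw [Finset.mem_range] at hj
    have h1 : n + j + 1 ≤ 3 * n + 1 := by omega
    have h2 : 3 * n + 1 - (n + j + 1) = 2 * n - j := by omega
    rw [← Nat.choose_symm h1, h2]
  have hR : ∀ j ∈ Finset.range (2 * n + 1),
      (-3 : ℤ) ^ j * (Nat.choose (3 * n - j) n : ℤ)
        = (-3 : ℤ) ^ j * (Nat.choose (3 * n - j) (2 * n - j) : ℤ) := by
    intro j hj
    rw [Finset.mem_range] at hj
    have h1 : n ≤ 3 * n - j := by omega
    have h2 : 3 * n - j - n = 2 * n - j := by omega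
    rw [← Nat.choose_symm h1, h2]
  rw [Finset.sum_congr rfl hL, Finset.sum_congr rfl hR]
  -- Step 1: express both sides as coefficients of polynomials
  set S₁ : ℤ[X] := (X + 1) ^ (3 * n + 1) * ∑ k ∈ range (2 * n + 1), ((-4 : ℤ[X]) * X) ^ k with hS₁
  set S₂ : ℤ[X] := ∑ k ∈ range (2 * n + 1), ((-3 : ℤ[X]) * X) ^ k * (X + 1) ^ (3 * n - k) with hS₂
  have hc₁ : S₁.coeff (2 * n) = ∑ j ∈ Finset.range (2 * n + 1),
      (-4 : ℤ) ^ j * (Nat.choose (3 * n + 1) (2 * n - j) : ℤ) := by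
    rw [hS₁, Finset.mul_sum, finset_sum_coeff]
    refine Finset.sum_congr rfl fun k hk => ?_
    rw [Finset.mem_range] at hk
    have : (X + 1 : ℤ[X]) ^ (3 * n + 1) * ((-4 : ℤ[X]) * X) ^ k
        = ((-4 : ℤ[X]) ^ k * (X + 1) ^ (3 * n + 1)) * X ^ k := by ring
    rw [this, coeff_mul_X_pow', if_pos (by omega)]
    have h4 : ((-4 : ℤ[X]) ^ k) = C ((-4 : ℤ) ^ k) := by
      simp [map_pow]
    rw [h4, coeff_C_mul, coeff_X_add_one_pow]
  have hc₂ : S₂.coeff (2 * n) = ∑ j ∈ Finset.range (2 * n + 1),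
      (-3 : ℤ) ^ j * (Nat.choose (3 * n - j) (2 * n - j) : ℤ) := by
    rw [hS₂, finset_sum_coeff]
    refine Finset.sum_congr rfl fun k hk => ?_
    rw [Finset.mem_range] at hk
    have : ((-3 : ℤ[X]) * X) ^ k * (X + 1) ^ (3 * n - k)
        = ((-3 : ℤ[X]) ^ k * (X + 1) ^ (3 * n - k)) * X ^ k := by ring
    rw [this, coeff_mul_X_pow', if_pos (by omega)]
    have h3 : ((-3 : ℤ[X]) ^ k) = C ((-3 : ℤ) ^ k) := by
      simp [map_pow]
    rw [h3, coeff_C_mul, coeff_X_add_one_pow]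
  rw [← hc₁, ← hc₂]
  -- Step 2: key polynomial identity
  have key : (4 * X + 1 : ℤ[X]) * (S₁ - S₂)
      = X ^ (2 * n + 1) * ((4 : ℤ[X]) ^ (2 * n + 1) * (X + 1) ^ (3 * n + 1)
          - (3 : ℤ[X]) ^ (2 * n + 1) * (X + 1) ^ n) := by
    have h1 : (∑ k ∈ range (2 * n + 1), ((-4 : ℤ[X]) * X) ^ k) * ((-4 : ℤ[X]) * X - 1)
        = ((-4 : ℤ[X]) * X) ^ (2 * n + 1) - 1 := geom_sum_mul _ _
    have h2 : S₂ = (X + 1) ^ n * ∑ k ∈ range (2 * n + 1),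
        ((-3 : ℤ[X]) * X) ^ k * (X + 1) ^ (2 * n + 1 - 1 - k) := by
      rw [hS₂, Finset.mul_sum]
      refine Finset.sum_congr rfl fun k hk => ?_
      rw [Finset.mem_range] at hk
      have e1 : 3 * n - k = n + (2 * n + 1 - 1 - k) := by omega
      rw [e1, pow_add]; ring
    have h3 : (∑ k ∈ range (2 * n + 1), ((-3 : ℤ[X]) * X) ^ k * (X + 1) ^ (2 * n + 1 - 1 - k))
        * ((-3 : ℤ[X]) * X - (X + 1))
        = ((-3 : ℤ[X]) * X) ^ (2 * n + 1) - (X + 1) ^ (2 * n + 1) := geom_sum₂_mul _ _ _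
    have e2 : (X + 1 : ℤ[X]) ^ (3 * n + 1) = (X + 1) ^ n * (X + 1) ^ (2 * n + 1) := by
      rw [← pow_add]; ring_nf
    have e3 : ((-4 : ℤ[X]) * X) ^ (2 * n + 1) = -(4 ^ (2 * n + 1) * X ^ (2 * n + 1)) := by
      rw [neg_mul, neg_pow, mul_pow, pow_succ, pow_mul]; ring_nf
    have e4 : ((-3 : ℤ[X]) * X) ^ (2 * n + 1) = -(3 ^ (2 * n + 1) * X ^ (2 * n + 1)) := by
      rw [neg_mul, neg_pow, mul_pow, pow_succ, pow_mul]; ring_nf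
    rw [h2]
    rw [e3] at h1
    rw [e4] at h3
    rw [hS₁]
    linear_combination (-(X + 1 : ℤ[X]) ^ (3 * n + 1)) * h1 + (X + 1 : ℤ[X]) ^ n * h3
      + (1 - 4 ^ (2 * n + 1) * X ^ (2 * n + 1)) * e2
  -- Step 3: divisibility
  have hdvd : (X : ℤ[X]) ^ (2 * n + 1) ∣ S₁ - S₂ := by
    have hp : Prime (X : ℤ[X]) := Polynomial.prime_X
    have hnd : ¬ (X : ℤ[X]) ∣ (4 * X + 1) := by
      rw [Polynomial.X_dvd_iff]
      simp
    exact hp.pow_dvd_of_dvd_mul_left _ hnd ⟨_, key⟩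
  obtain ⟨Q, hQ⟩ := hdvd
  have : S₁.coeff (2 * n) - S₂.coeff (2 * n) = 0 := by
    have := congrArg (fun p => Polynomial.coeff p (2 * n)) hQ
    simp only [Polynomial.coeff_sub] at this ⊢
    rw [this]
    rw [mul_comm, coeff_mul_X_pow', if_neg (by omega)]
  linarith [this]
end

section
/- For every nonnegative integer n, Σ_{j=0}^{n} 2ʲ · C(3n+1, n-j) = Σ_{j=0}^{n} 3ʲ · C(3n-j, 2n), where both sides are computed as natural numbers. -/
/-- Upper-index Vandermonde convolution:
`∑_{j=0}^{m} C(j,a) C(m-j,b) = C(m+1, a+b+1)`. -/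
lemma conv_choose : ∀ (m a b : ℕ),
    ∑ j ∈ Finset.range (m + 1), Nat.choose j a * Nat.choose (m - j) b =
      Nat.choose (m + 1) (a + b + 1) := by
  intro m
  induction m with
  | zero =>
    intro a b
    cases a <;> cases b <;> simp [Nat.choose]
  | succ m ih =>
    intro a b
    cases b with
    | zero =>
      rw [Finset.sum_range_succ]
      have h1 : ∑ j ∈ Finset.range (m + 1),
          Nat.choose j a * Nat.choose (m + 1 - j) 0 =
          ∑ j ∈ Finset.range (m + 1), Nat.choose j a * Nat.choose (m - j) 0 := by
        apply Finset.sum_congr rfl; intro j _; simp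
      rw [h1, ih a 0]
      have h2 : Nat.choose (m + 1 + 1) (a + 0 + 1) =
          Nat.choose (m + 1) a + Nat.choose (m + 1) (a + 0 + 1) := by
        rw [Nat.choose_succ_succ]
      rw [h2]
      simp [Nat.add_comm]
    | succ b =>
      rw [Finset.sum_range_succ]
      have hlast : Nat.choose (m + 1) a * Nat.choose (m + 1 - (m + 1)) (b + 1) = 0 := by
        simp
      rw [hlast, add_zero]
      have h1 : ∑ j ∈ Finset.range (m + 1),
          Nat.choose j a * Nat.choose (m + 1 - j) (b + 1) =
          ∑ j ∈ Finset.range (m + 1),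
            (Nat.choose j a * Nat.choose (m - j) b
              + Nat.choose j a * Nat.choose (m - j) (b + 1)) := by
        apply Finset.sum_congr rfl
        intro j hj
        have hjm : j ≤ m := Nat.lt_succ_iff.mp (Finset.mem_range.mp hj)
        have : m + 1 - j = (m - j) + 1 := by omega
        rw [this, Nat.choose_succ_succ, Nat.mul_add]
      rw [h1, Finset.sum_add_distrib, ih a b, ih a (b + 1)]
      have h2 : a + (b + 1) + 1 = (a + b + 1) + 1 := by omega
      rw [h2]
      exact (Nat.choose_succ_succ (m + 1) (a + b + 1)).symm

theorem ruehr_sums_equal_right (n : ℕ) :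
    ∑ j ∈ Finset.range (n + 1), 2 ^ j * Nat.choose (3 * n + 1) (n - j) =
      ∑ j ∈ Finset.range (n + 1), 3 ^ j * Nat.choose (3 * n - j) (2 * n) := by
  -- Expand 3^j = (2+1)^j and extend the i-range to n+1 (extra terms vanish).
  have step1 : ∀ j ∈ Finset.range (n + 1),
      3 ^ j * Nat.choose (3 * n - j) (2 * n) =
      ∑ i ∈ Finset.range (n + 1),
        2 ^ i * (Nat.choose j i * Nat.choose (3 * n - j) (2 * n)) := by
    intro j hj
    have hjn : j ≤ n := Nat.lt_succ_iff.mp (Finset.mem_range.mp hj)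
    have hpow : (3 : ℕ) ^ j = ∑ i ∈ Finset.range (j + 1), 2 ^ i * Nat.choose j i := by
      have h := add_pow (2 : ℕ) 1 j
      simp only [one_pow, mul_one] at h
      exact h
    have hext : ∑ i ∈ Finset.range (j + 1), 2 ^ i * Nat.choose j i =
        ∑ i ∈ Finset.range (n + 1), 2 ^ i * Nat.choose j i := by
      apply Finset.sum_subset
      · intro x hx
        simp only [Finset.mem_range] at *
        omega
      · intro x _ hx
        simp only [Finset.mem_range, not_lt] at hx
        rw [Nat.choose_eq_zero_of_lt (by omega), mul_zero]
    rw [hpow, hext, Finset.sum_mul]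
    apply Finset.sum_congr rfl
    intro i _
    ring
  rw [Finset.sum_congr rfl step1, Finset.sum_comm]
  apply Finset.sum_congr rfl
  intro i hi
  have hin : i ≤ n := Nat.lt_succ_iff.mp (Finset.mem_range.mp hi)
  rw [← Finset.mul_sum]
  congr 1
  -- ∑_{j=0}^{n} C(j,i) C(3n-j, 2n) = C(3n+1, 2n+i+1) = C(3n+1, n-i)
  have hext : ∑ j ∈ Finset.range (n + 1), Nat.choose j i * Nat.choose (3 * n - j) (2 * n) =
      ∑ j ∈ Finset.range (3 * n + 1), Nat.choose j i * Nat.choose (3 * n - j) (2 * n) := by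
    apply Finset.sum_subset
    · intro x hx
      simp only [Finset.mem_range] at *
      omega
    · intro x hx hx'
      simp only [Finset.mem_range, not_lt] at hx hx'
      rw [Nat.choose_eq_zero_of_lt (show 3 * n - x < 2 * n by omega), mul_zero]
  rw [hext, conv_choose (3 * n) i (2 * n)]
  have h1 : i + 2 * n + 1 ≤ 3 * n + 1 := by omega
  rw [← Nat.choose_symm h1]
  congr 1
  omega
end

section
/- Define S(n) = Σ_{j=0}^{n} 3ʲ · C(3n-j, 2n) for nonnegative integers n. Then for every nonnegative integer n, -27·S(n) + 4·S(n+1) = -3 · (3n+1)! / ((2n+1)! · (n+1)!), where the identity is stated in the rationals ℚ. -/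
/-!
Put F(n, j) = 3^j C(3n - j, 2n). Zeilberger's algorithm produces a hypergeometric certificate
G(n, i), a rational function of n and i times 3^i C(3n + 1 - i, 2n), with
-27 F(n, j) + 4 F(n + 1, j) = G(n, j + 1) - G(n, j) for j ≤ n. Summing over j ≤ n telescopes to
G(n, n + 1) - G(n, 0); the remaining term F(n + 1, n + 1) of S(n + 1) is 3^(n + 1), and both
boundary values of G are explicit.
-/

open Finset Nat

section CastChoose

variable {K : Type*} [Field K] [CharZero K]

lemma cast_choose_succ_succ (m k : ℕ) :
    ((m + 1).choose (k + 1) : K) = (m + 1) / (k + 1) * m.choose k := by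
  rw [div_mul_eq_mul_div, eq_div_iff (by exact_mod_cast k.succ_ne_zero)]
  exact_mod_cast (Nat.add_one_mul_choose_eq m k).symm

lemma cast_choose_add_succ (k d : ℕ) :
    ((k + d + 1).choose k : K) = (k + d + 1) / (d + 1) * (k + d).choose k := by
  have h := Nat.choose_mul_succ_eq (k + d) k
  rw [show k + d + 1 - k = d + 1 by omega] at h
  rw [div_mul_eq_mul_div, eq_div_iff (by exact_mod_cast d.succ_ne_zero),
    mul_comm _ ((k + d).choose k : K)]
  exact_mod_cast h.symm

end CastChoose

def ruehrTerm (n j : ℕ) : ℚ := 3 ^ j * ((3 * n - j).choose (2 * n) : ℚ)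

def ruehrCertificatePoly (n i : ℚ) : ℚ :=
  9 * n ^ 2 + 12 * n + 3 - (27 * n ^ 2 + 36 * n + 11) * i + (12 * n + 9) * i ^ 2 - i ^ 3

-- At n = 0, i = 1 the last factor of the denominator vanishes, so the value there is the junk
-- value 0 rather than the -12 that telescoping would need; hence the case n = 0 is done apart.
def ruehrCertificate (n i : ℕ) : ℚ :=
  3 ^ i * ((3 * n + 1 - i).choose (2 * n) : ℚ) * ruehrCertificatePoly n i /
    ((2 * n + 1) * (n + 1) * ((3 * n + 1 - i : ℕ) : ℚ))

lemma ruehrTerm_self (n : ℕ) : ruehrTerm n n = 3 ^ n := by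
  simp [ruehrTerm, show 3 * n - n = 2 * n by omega]

lemma ruehrCertificate_zero (n : ℕ) :
    ruehrCertificate n 0 = 3 * (3 * n + 1)! / ((2 * n + 1)! * (n + 1)! : ℚ) := by
  have hchoose : ((3 * n + 1).choose (2 * n) : ℚ) * (2 * n)! * (n + 1)! = (3 * n + 1)! := by
    have h := Nat.choose_mul_factorial_mul_factorial (by omega : 2 * n ≤ 3 * n + 1)
    rw [show 3 * n + 1 - 2 * n = n + 1 by omega] at h
    exact_mod_cast h
  rw [← hchoose, ruehrCertificate, ruehrCertificatePoly, Nat.factorial_succ (2 * n)]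
  push_cast
  field_simp
  ring

lemma ruehrCertificate_succ_self {n : ℕ} (hn : 0 < n) :
    ruehrCertificate n (n + 1) = -4 * 3 ^ (n + 1) := by
  simp only [ruehrCertificate, ruehrCertificatePoly, show 3 * n + 1 - (n + 1) = 2 * n by omega,
    Nat.choose_self]
  have hn' : (n : ℚ) ≠ 0 := by positivity
  push_cast
  field_simp
  ring

lemma ruehrTerm_telescope {n j : ℕ} (hn : 0 < n) (hj : j ≤ n) :
    -27 * ruehrTerm n j + 4 * ruehrTerm (n + 1) j =
      ruehrCertificate n (j + 1) - ruehrCertificate n j := by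
  obtain ⟨d, rfl⟩ := Nat.exists_eq_add_of_le hj
  simp only [ruehrTerm, ruehrCertificate, ruehrCertificatePoly,
    show 3 * (j + d) - j = 2 * (j + d) + d by omega,
    show 3 * (j + d + 1) - j = 2 * (j + d) + d + 1 + 1 + 1 by omega,
    show 2 * (j + d + 1) = 2 * (j + d) + 1 + 1 by omega,
    show 3 * (j + d) + 1 - (j + 1) = 2 * (j + d) + d by omega,
    show 3 * (j + d) + 1 - j = 2 * (j + d) + d + 1 by omega]
  -- every binomial coefficient becomes a rational multiple of C(2n + d, 2n)
  rw [cast_choose_succ_succ, cast_choose_succ_succ, cast_choose_add_succ]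
  have hN : (2 * (j + d) + d : ℚ) ≠ 0 := by
    have : (0 : ℚ) < j + d := by exact_mod_cast hn
    positivity
  push_cast
  field_simp
  ring

theorem ruehr_S_recurrence (S : ℕ → ℚ)
    (hS : ∀ n : ℕ, S n = ∑ j ∈ Finset.range (n + 1), (3 : ℚ) ^ j * (Nat.choose (3 * n - j) (2 * n) : ℚ)) :
    ∀ n : ℕ, -27 * S n + 4 * S (n + 1) =
      -3 * (Nat.factorial (3 * n + 1) : ℚ) /
        ((Nat.factorial (2 * n + 1) : ℚ) * (Nat.factorial (n + 1) : ℚ)) := by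
  intro n
  rcases Nat.eq_zero_or_pos n with rfl | hn
  · norm_num [hS, Finset.sum_range_succ]
  have hS' : ∀ m, S m = ∑ j ∈ range (m + 1), ruehrTerm m j := hS
  calc -27 * S n + 4 * S (n + 1)
      = ∑ j ∈ range (n + 1), (-27 * ruehrTerm n j + 4 * ruehrTerm (n + 1) j)
          + 4 * ruehrTerm (n + 1) (n + 1) := by
        simp only [hS', sum_range_succ _ (n + 1), sum_add_distrib, mul_add, mul_sum]
        ring
    _ = ruehrCertificate n (n + 1) - ruehrCertificate n 0 + 4 * 3 ^ (n + 1) := by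
        rw [sum_congr rfl fun j hj => ruehrTerm_telescope hn (mem_range_succ_iff.mp hj),
          sum_range_sub, ruehrTerm_self]
    _ = _ := by
        rw [ruehrCertificate_succ_self hn, ruehrCertificate_zero]
        ring
end

section
/- Define U(n) = Σ_{j=0}^{n} 2ʲ · C(3n+1, n-j) for nonnegative integers n. Then for every nonnegative integer n, -27·U(n) + 4·U(n+1) = -3 · (3n+1)! / ((2n+1)! · (n+1)!), where the identity is stated in the rationals ℚ. -/
def Fq (N m : ℕ) : ℚ := ∑ t ∈ Finset.range (m + 1), 2 ^ (m - t) * (Nat.choose N t : ℚ)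

lemma Fq_pascal (N m : ℕ) : Fq (N + 1) (m + 1) = Fq N (m + 1) + Fq N m := by
  unfold Fq
  rw [Finset.sum_range_succ', Finset.sum_range_succ' (fun t => 2 ^ (m + 1 - t) * (Nat.choose N t : ℚ))]
  simp only [Nat.choose_succ_succ, Nat.cast_add, Nat.choose_zero_right]
  push_cast
  simp only [mul_add]
  rw [Finset.sum_add_distrib]
  ring

lemma Fq_step (N m : ℕ) : Fq N (m + 1) = 2 * Fq N m + (Nat.choose N (m + 1) : ℚ) := by
  unfold Fq
  rw [Finset.sum_range_succ, Finset.mul_sum]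
  congr 1
  · apply Finset.sum_congr rfl
    intro t ht
    rw [Finset.mem_range] at ht
    have : m + 1 - t = (m - t) + 1 := by omega
    rw [this, pow_succ]
    ring
  · simp

lemma Fq_combo (N m : ℕ) :
    4 * Fq (N + 3) (m + 3) = 27 * Fq N (m + 2)
      + 4 * (Nat.choose N (m + 3) : ℚ) - 7 * (Nat.choose N (m + 2) : ℚ)
      - 2 * (Nat.choose N (m + 1) : ℚ) := by
  have p1 : Fq (N + 3) (m + 3) = Fq (N + 2) (m + 3) + Fq (N + 2) (m + 2) := by
    simpa only [show N + 2 + 1 = N + 3 by omega, show m + 2 + 1 = m + 3 by omega]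
      using Fq_pascal (N + 2) (m + 2)
  have p2a : Fq (N + 2) (m + 3) = Fq (N + 1) (m + 3) + Fq (N + 1) (m + 2) := by
    simpa only [show N + 1 + 1 = N + 2 by omega, show m + 2 + 1 = m + 3 by omega]
      using Fq_pascal (N + 1) (m + 2)
  have p2b : Fq (N + 2) (m + 2) = Fq (N + 1) (m + 2) + Fq (N + 1) (m + 1) := by
    simpa only [show N + 1 + 1 = N + 2 by omega, show m + 1 + 1 = m + 2 by omega]
      using Fq_pascal (N + 1) (m + 1)
  have p3a : Fq (N + 1) (m + 3) = Fq N (m + 3) + Fq N (m + 2) := by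
    simpa only [show m + 2 + 1 = m + 3 by omega] using Fq_pascal N (m + 2)
  have p3b : Fq (N + 1) (m + 2) = Fq N (m + 2) + Fq N (m + 1) := by
    simpa only [show m + 1 + 1 = m + 2 by omega] using Fq_pascal N (m + 1)
  have p3c : Fq (N + 1) (m + 1) = Fq N (m + 1) + Fq N m := by
    exact Fq_pascal N m
  have q1 : Fq (N + 3) (m + 3)
      = Fq N (m + 3) + 3 * Fq N (m + 2) + 3 * Fq N (m + 1) + Fq N m := by
    linear_combination p1 + p2a + p2b + p3a + 2 * p3b + p3c
  have s3 : Fq N (m + 3) = 2 * Fq N (m + 2) + (Nat.choose N (m + 3) : ℚ) := by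
    simpa only [show m + 2 + 1 = m + 3 by omega] using Fq_step N (m + 2)
  have s2 : Fq N (m + 2) = 2 * Fq N (m + 1) + (Nat.choose N (m + 2) : ℚ) := by
    simpa only [show m + 1 + 1 = m + 2 by omega] using Fq_step N (m + 1)
  have s1 : Fq N (m + 1) = 2 * Fq N m + (Nat.choose N (m + 1) : ℚ) := Fq_step N m
  linear_combination 4 * q1 + 4 * s3 - 7 * s2 - 2 * s1

lemma choose_as_factorial (a b : ℕ) (h : b ≤ a) :
    (Nat.choose a b : ℚ) = (Nat.factorial a : ℚ) / ((Nat.factorial b : ℚ) * (Nat.factorial (a - b) : ℚ)) := by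
  rw [eq_div_iff (by positivity)]
  have := Nat.choose_mul_factorial_mul_factorial h
  push_cast [← this]
  ring

lemma key_binom (m : ℕ) :
    4 * (Nat.choose (3 * m + 7) (m + 3) : ℚ) - 7 * (Nat.choose (3 * m + 7) (m + 2) : ℚ)
      - 2 * (Nat.choose (3 * m + 7) (m + 1) : ℚ)
    = -3 * (Nat.factorial (3 * m + 7) : ℚ)
        / ((Nat.factorial (2 * m + 5) : ℚ) * (Nat.factorial (m + 3) : ℚ)) := by
  rw [choose_as_factorial _ _ (by omega), choose_as_factorial _ _ (by omega),
      choose_as_factorial _ _ (by omega)]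
  rw [show 3 * m + 7 - (m + 3) = 2 * m + 4 by omega,
      show 3 * m + 7 - (m + 2) = 2 * m + 5 by omega,
      show 3 * m + 7 - (m + 1) = 2 * m + 6 by omega]
  have f1 : (Nat.factorial (m + 3) : ℚ) = (m + 3) * (m + 2) * (Nat.factorial (m + 1) : ℚ) := by
    rw [show m + 3 = (m + 2) + 1 by omega, Nat.factorial_succ,
        show m + 2 = (m + 1) + 1 by omega, Nat.factorial_succ]
    push_cast; ring
  have f2 : (Nat.factorial (m + 2) : ℚ) = (m + 2) * (Nat.factorial (m + 1) : ℚ) := by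
    rw [show m + 2 = (m + 1) + 1 by omega, Nat.factorial_succ]; push_cast; ring
  have g1 : (Nat.factorial (2 * m + 5) : ℚ) = (2 * m + 5) * (Nat.factorial (2 * m + 4) : ℚ) := by
    rw [show 2 * m + 5 = (2 * m + 4) + 1 by omega, Nat.factorial_succ]; push_cast; ring
  have g2 : (Nat.factorial (2 * m + 6) : ℚ)
      = (2 * m + 6) * (2 * m + 5) * (Nat.factorial (2 * m + 4) : ℚ) := by
    rw [show 2 * m + 6 = (2 * m + 5) + 1 by omega, Nat.factorial_succ,
        show 2 * m + 5 = (2 * m + 4) + 1 by omega, Nat.factorial_succ]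
    push_cast; ring
  rw [f1, f2, g1, g2]
  have h1 : (Nat.factorial (m + 1) : ℚ) ≠ 0 := by positivity
  have h2 : (Nat.factorial (2 * m + 4) : ℚ) ≠ 0 := by positivity
  field_simp
  ring

theorem ruehr_U_recurrence (U : ℕ → ℚ)
    (hU : ∀ n : ℕ, U n = ∑ j ∈ Finset.range (n + 1), (2 : ℚ) ^ j * (Nat.choose (3 * n + 1) (n - j) : ℚ)) :
    ∀ n : ℕ, -27 * U n + 4 * U (n + 1) =
      -3 * (Nat.factorial (3 * n + 1) : ℚ) /
        ((Nat.factorial (2 * n + 1) : ℚ) * (Nat.factorial (n + 1) : ℚ)) := by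
  have hF : ∀ n : ℕ, U n = Fq (3 * n + 1) n := by
    intro n
    rw [hU n, Fq, ← Finset.sum_range_reflect]
    apply Finset.sum_congr rfl
    intro j hj
    rw [Finset.mem_range] at hj
    rw [show n + 1 - 1 - j = n - j by omega, Nat.sub_sub_self (by omega : j ≤ n)]
  intro n
  match n with
  | 0 =>
    rw [hF, hF]
    simp [Fq, Finset.sum_range_succ, Nat.factorial]
    norm_num [Nat.choose]
  | 1 =>
    rw [hF, hF]
    simp [Fq, Finset.sum_range_succ, Nat.factorial]
    norm_num [Nat.choose]
  | (m + 2) =>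
    rw [hF, hF]
    rw [show 3 * (m + 2) + 1 = 3 * m + 7 by ring,
        show 3 * (m + 2 + 1) + 1 = (3 * m + 7) + 3 by ring,
        show m + 2 + 1 = m + 3 by ring,
        show 2 * (m + 2) + 1 = 2 * m + 5 by ring]
    rw [show m + 2 = m + 2 by rfl]
    linear_combination Fq_combo (3 * m + 7) m + key_binom m
end

section
/- Define V(n) = Σ_{j=0}^{2n} (-4)ʲ · C(3n+1, n+j+1) for nonnegative integers n. Then for every nonnegative integer n, -27·V(n) + 4·V(n+1) = -3 · (3n+1)! / ((2n+1)! · (n+1)!), where the identity is stated in the rationals ℚ. -/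
/-!
Write `T N a = ∑_{j ≥ 0} x ^ j * C(N, a + j)` for the weighted tail of row `N` of Pascal's
triangle. Splitting off the first term gives `T N a = C(N, a) + x * T N (a + 1)`, and Pascal's rule
then gives `T (N + 1) (a + 1) = C(N, a) + (1 + x) * T N (a + 1)`. Since `V n = T (3n+1) (n+1)` at
`x = -4`, three applications of the second rule and one of the first express
`-27 V(n) + 4 V(n+1)` through `C(3n+1, n+1)`, `C(3n+2, n+1)` and `C(3n+3, n+1)`, each a rational
multiple of `(3n+1)! / ((2n+1)! (n+1)!)`.
-/

open Finset

section Semiring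

variable {R : Type*} [Semiring R]

/-- Terms with `a + j > N` vanish, so this is the whole tail `∑_{j ≥ 0} x ^ j * C(N, a + j)`. -/
def chooseTail (x : R) (N a : ℕ) : R :=
  ∑ j ∈ range (N + 1), x ^ j * (N.choose (a + j) : R)

theorem chooseTail_eq_sum_range (x : R) {N a m : ℕ} (h : N < a + m) :
    chooseTail x N a = ∑ j ∈ range m, x ^ j * (N.choose (a + j) : R) := by
  have hvanish : ∀ k, N < a + k → ∀ j ∈ range (N + 1 + m), j ∉ range k →
      x ^ j * (N.choose (a + j) : R) = 0 := by
    intro k hk j _ hj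
    rw [Nat.choose_eq_zero_of_lt (by simp at hj; omega), Nat.cast_zero, mul_zero]
  exact (sum_subset (range_subset_range.2 (Nat.le_add_right _ m)) (hvanish _ (by omega))).trans
    (sum_subset (range_subset_range.2 (Nat.le_add_left m _)) (hvanish _ h)).symm

theorem chooseTail_eq_choose_add (x : R) (N a : ℕ) :
    chooseTail x N a = N.choose a + x * chooseTail x N (a + 1) := by
  rw [chooseTail_eq_sum_range x (m := N + 2) (by omega), sum_range_succ', chooseTail, mul_sum,
    add_comm]
  simp only [pow_zero, one_mul, add_zero, pow_succ', mul_assoc, add_assoc, add_comm 1]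

theorem chooseTail_succ_succ (x : R) (N a : ℕ) :
    chooseTail x (N + 1) (a + 1) = N.choose a + (1 + x) * chooseTail x N (a + 1) := by
  have hpascal : chooseTail x (N + 1) (a + 1) = chooseTail x N a + chooseTail x N (a + 1) := by
    rw [chooseTail, chooseTail_eq_sum_range x (m := N + 2) (by omega),
      chooseTail_eq_sum_range x (a := a + 1) (m := N + 2) (by omega), ← sum_add_distrib]
    refine sum_congr rfl fun j _ => ?_
    rw [add_right_comm, Nat.choose_succ_succ', Nat.cast_add, mul_add]
  rw [hpascal, chooseTail_eq_choose_add x N a, add_mul, one_mul, add_assoc, add_comm (x * _)]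

end Semiring

theorem chooseTail_neg_four_recurrence {R : Type*} [Ring R] (N a : ℕ) :
    -27 * chooseTail (-4 : R) N a + 4 * chooseTail (-4 : R) (N + 3) (a + 1) =
      4 * (N + 2).choose a - 12 * (N + 1).choose a + 9 * N.choose a := by
  rw [chooseTail_succ_succ, chooseTail_succ_succ, chooseTail_succ_succ,
    chooseTail_eq_choose_add _ N a]
  noncomm_ring

theorem four_choose_sub_twelve_choose_add_nine_choose (n : ℕ) :
    4 * ((3 * n + 3).choose (n + 1) : ℚ) - 12 * (3 * n + 2).choose (n + 1) +
        9 * (3 * n + 1).choose (n + 1) =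
      -3 * ((3 * n + 1).factorial : ℚ) / ((2 * n + 1).factorial * (n + 1).factorial) := by
  rw [Nat.cast_choose ℚ (by omega : n + 1 ≤ 3 * n + 3),
    Nat.cast_choose ℚ (by omega : n + 1 ≤ 3 * n + 2), Nat.cast_choose ℚ (by omega : n + 1 ≤ 3 * n + 1),
    show 3 * n + 3 - (n + 1) = 2 * n + 1 + 1 by omega, show 3 * n + 2 - (n + 1) = 2 * n + 1 by omega,
    show 3 * n + 1 - (n + 1) = 2 * n by omega,
    show 3 * n + 3 = 3 * n + 1 + 1 + 1 by omega, show 3 * n + 2 = 3 * n + 1 + 1 by omega]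
  simp only [Nat.factorial_succ]
  push_cast
  field_simp
  ring

theorem ruehr_V_recurrence (V : ℕ → ℚ)
    (hV : ∀ n : ℕ, V n = ∑ j ∈ Finset.range (2 * n + 1), (-4 : ℚ) ^ j * (Nat.choose (3 * n + 1) (n + j + 1) : ℚ)) :
    ∀ n : ℕ, -27 * V n + 4 * V (n + 1) =
      -3 * (Nat.factorial (3 * n + 1) : ℚ) /
        ((Nat.factorial (2 * n + 1) : ℚ) * (Nat.factorial (n + 1) : ℚ)) := by
  have hV_eq_chooseTail (k : ℕ) : V k = chooseTail (-4) (3 * k + 1) (k + 1) := by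
    rw [hV, chooseTail_eq_sum_range _ (m := 2 * k + 1) (by omega)]
    simp only [add_right_comm]
  intro n
  rw [hV_eq_chooseTail, hV_eq_chooseTail, show 3 * (n + 1) + 1 = 3 * n + 1 + 3 by ring,
    chooseTail_neg_four_recurrence, ← four_choose_sub_twelve_choose_add_nine_choose]
end

section
/- Define A(n) = Σ_{k=0}^{n} C(3k, k) · C(3n-3k, n-k) for nonnegative integers n. Then for every nonnegative integer n, -81(3n+2)(3n+4)·A(n) + (216n² + 594n + 420)·A(n+1) - 8(2n+3)(n+2)·A(n+2) = 0. -/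
set_option maxHeartbeats 1600000

def Bq (j : ℕ) : ℚ := ((3 * j).choose j : ℚ)

lemma Bq_zero : Bq 0 = 1 := by simp [Bq]
lemma Bq_one : Bq 1 = 3 := by norm_num [Bq]
lemma Bq_two : Bq 2 = 15 := by norm_num [Bq, Nat.choose]

lemma Bstep (j : ℕ) :
    (2*(j:ℚ)+2) * (2*(j:ℚ)+1) * Bq (j+1) = 3*(3*(j:ℚ)+1)*(3*(j:ℚ)+2) * Bq j := by
  have h1 := Nat.choose_mul_factorial_mul_factorial (show j+1 ≤ 3*(j+1) by omega)
  have h2 := Nat.choose_mul_factorial_mul_factorial (show j ≤ 3*j by omega)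
  rw [show 3*(j+1) - (j+1) = 2*j+2 by omega] at h1
  rw [show 3*j - j = 2*j by omega] at h2
  rw [show 3*(j+1) = 3*j+3 by ring] at h1
  have f1 : (3*j+3).factorial = (3*j+3)*((3*j+2)*((3*j+1)*(3*j).factorial)) := by
    rw [show 3*j+3 = (3*j+2)+1 by ring, Nat.factorial_succ,
        show 3*j+2 = (3*j+1)+1 by ring, Nat.factorial_succ, Nat.factorial_succ]
  have f2 : (2*j+2).factorial = (2*j+2)*((2*j+1)*(2*j).factorial) := by
    rw [show 2*j+2 = (2*j+1)+1 by ring, Nat.factorial_succ, Nat.factorial_succ]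
  rw [f1, f2, Nat.factorial_succ] at h1
  have q1 : (((3*j+3).choose (j+1) : ℚ)) * (((j:ℚ)+1) * (j.factorial : ℚ)) *
      ((2*(j:ℚ)+2)*((2*(j:ℚ)+1)*((2*j).factorial : ℚ)))
      = (3*(j:ℚ)+3)*((3*(j:ℚ)+2)*((3*(j:ℚ)+1)*((3*j).factorial : ℚ))) := by
    exact_mod_cast congrArg (Nat.cast (R := ℚ)) h1
  have q2 : (((3*j).choose j : ℚ)) * (j.factorial : ℚ) * ((2*j).factorial : ℚ)
      = ((3*j).factorial : ℚ) := by
    exact_mod_cast congrArg (Nat.cast (R := ℚ)) h2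
  have hBj : Bq (j+1) = (((3*j+3).choose (j+1) : ℕ) : ℚ) := by
    rw [Bq, show 3*(j+1) = 3*j+3 by ring]
  rw [hBj, Bq]
  have hne : ((j:ℚ)+1) * (j.factorial : ℚ) * ((2*j).factorial : ℚ) ≠ 0 := by
    positivity
  apply mul_right_cancel₀ hne
  linear_combination q1 - (3*(3*(j:ℚ)+1)*(3*(j:ℚ)+2)*((j:ℚ)+1)) * q2

/-- Zeilberger certificate term. -/
def Gc (n k : ℕ) : ℚ :=
  (k : ℚ) * (9*(3*((n-k : ℕ):ℚ)+1)*(3*((n-k : ℕ):ℚ)+2)*(3*((n-k : ℕ):ℚ)+4)^2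
      - (1458*((n-k : ℕ):ℚ)^4+4617*((n-k : ℕ):ℚ)^3+4941*((n-k : ℕ):ℚ)^2
          +2160*((n-k : ℕ):ℚ)+324)*(k:ℚ)
      - (1458*((n-k : ℕ):ℚ)^3+3726*((n-k : ℕ):ℚ)^2+2592*((n-k : ℕ):ℚ)+504)*(k:ℚ)^2)
    * Bq k * Bq (n - k)
  / (((n:ℚ)+1) * (((n-k : ℕ):ℚ)+1) * (((n-k : ℕ):ℚ)+2)
      * (2*((n-k : ℕ):ℚ)+1) * (2*((n-k : ℕ):ℚ)+3))

lemma Gc_zero (n : ℕ) : Gc n 0 = 0 := by simp [Gc]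

lemma key (j k : ℕ) :
    -81*(3*((k:ℚ)+(j:ℚ)+1)+2)*(3*((k:ℚ)+(j:ℚ)+1)+4) * (Bq k * Bq (j+1))
      + (216*((k:ℚ)+(j:ℚ)+1)^2+594*((k:ℚ)+(j:ℚ)+1)+420) * (Bq k * Bq (j+2))
      - 8*(2*((k:ℚ)+(j:ℚ)+1)+3)*(((k:ℚ)+(j:ℚ)+1)+2) * (Bq k * Bq (j+3))
    = Gc (k+j+1) (k+1) - Gc (k+j+1) k := by
  have hj1 : Bq (j+1) = 3*(3*(j:ℚ)+1)*(3*(j:ℚ)+2) / ((2*(j:ℚ)+2)*(2*(j:ℚ)+1)) * Bq j := by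
    rw [div_mul_eq_mul_div, eq_div_iff (by positivity)]
    linear_combination Bstep j
  have hj2 : Bq (j+2) = 3*(3*(j:ℚ)+4)*(3*(j:ℚ)+5) / ((2*(j:ℚ)+4)*(2*(j:ℚ)+3)) * Bq (j+1) := by
    have e1 := Bstep (j+1); push_cast at e1
    rw [div_mul_eq_mul_div, eq_div_iff (by positivity)]
    linear_combination e1
  have hj3 : Bq (j+3) = 3*(3*(j:ℚ)+7)*(3*(j:ℚ)+8) / ((2*(j:ℚ)+6)*(2*(j:ℚ)+5)) * Bq (j+2) := by
    have e2 := Bstep (j+2); push_cast at e2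
    rw [div_mul_eq_mul_div, eq_div_iff (by positivity)]
    linear_combination e2
  have hk1 : Bq (k+1) = 3*(3*(k:ℚ)+1)*(3*(k:ℚ)+2) / ((2*(k:ℚ)+2)*(2*(k:ℚ)+1)) * Bq k := by
    rw [div_mul_eq_mul_div, eq_div_iff (by positivity)]
    linear_combination Bstep k
  simp only [Gc]
  rw [show k+j+1 - (k+1) = j by omega, show k+j+1 - k = j+1 by omega]
  rw [hj3, hj2, hj1, hk1]
  push_cast
  have d1 : (2*(j:ℚ)+1) ≠ 0 := by positivity
  have d2 : (2*(j:ℚ)+2) ≠ 0 := by positivity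
  have d3 : (2*(j:ℚ)+3) ≠ 0 := by positivity
  have d4 : (2*(j:ℚ)+4) ≠ 0 := by positivity
  have d5 : (2*(j:ℚ)+5) ≠ 0 := by positivity
  have d6 : (2*(j:ℚ)+6) ≠ 0 := by positivity
  have d7 : (2*(k:ℚ)+1) ≠ 0 := by positivity
  have d8 : (2*(k:ℚ)+2) ≠ 0 := by positivity
  have d9 : ((k:ℚ)+(j:ℚ)+1+1) ≠ 0 := by positivity
  have d10 : ((j:ℚ)+1) ≠ 0 := by positivity
  have d11 : ((j:ℚ)+2) ≠ 0 := by positivity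
  have d12 : ((j:ℚ)+3) ≠ 0 := by positivity
  have d13 : ((j:ℚ)+1+1) ≠ 0 := by positivity
  have d14 : ((j:ℚ)+1+2) ≠ 0 := by positivity
  have d15 : (2*((j:ℚ)+1)+1) ≠ 0 := by positivity
  have d16 : (2*((j:ℚ)+1)+3) ≠ 0 := by positivity
  field_simp
  ring

lemma bdy (n : ℕ) :
    Gc n n + (-81*(3*(n:ℚ)+2)*(3*(n:ℚ)+4))*Bq n
      + (216*(n:ℚ)^2+594*(n:ℚ)+420)*(3*Bq n + Bq (n+1))
      - 8*(2*(n:ℚ)+3)*((n:ℚ)+2)*(15*Bq n + 3*Bq (n+1) + Bq (n+2)) = 0 := by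
  have hn1 : Bq (n+1) = 3*(3*(n:ℚ)+1)*(3*(n:ℚ)+2) / ((2*(n:ℚ)+2)*(2*(n:ℚ)+1)) * Bq n := by
    rw [div_mul_eq_mul_div, eq_div_iff (by positivity)]
    linear_combination Bstep n
  have hn2 : Bq (n+2) = 3*(3*(n:ℚ)+4)*(3*(n:ℚ)+5) / ((2*(n:ℚ)+4)*(2*(n:ℚ)+3)) * Bq (n+1) := by
    have e1 := Bstep (n+1); push_cast at e1
    rw [div_mul_eq_mul_div, eq_div_iff (by positivity)]
    linear_combination e1
  simp only [Gc, Nat.sub_self, Bq_zero]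
  rw [hn2, hn1]
  push_cast
  have d1 : (2*(n:ℚ)+1) ≠ 0 := by positivity
  have d2 : (2*(n:ℚ)+2) ≠ 0 := by positivity
  have d3 : (2*(n:ℚ)+3) ≠ 0 := by positivity
  have d4 : (2*(n:ℚ)+4) ≠ 0 := by positivity
  have d5 : ((n:ℚ)+1) ≠ 0 := by positivity
  field_simp
  ring

lemma Ssum (m : ℕ) :
    ∑ k ∈ Finset.range (m+1),
      (((3*k).choose k : ℚ) * (((3*m - 3*k).choose (m-k) : ℕ) : ℚ))
    = ∑ k ∈ Finset.range (m+1), Bq k * Bq (m-k) := by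
  apply Finset.sum_congr rfl
  intro k hk
  rw [Finset.mem_range] at hk
  rw [show 3*m - 3*k = 3*(m-k) by omega]
  rfl

lemma main_q (n : ℕ) :
    -81*(3*(n:ℚ)+2)*(3*(n:ℚ)+4) * (∑ k ∈ Finset.range (n+1), Bq k * Bq (n-k))
    + (216*(n:ℚ)^2+594*(n:ℚ)+420) * (∑ k ∈ Finset.range (n+1+1), Bq k * Bq (n+1-k))
    - 8*(2*(n:ℚ)+3)*((n:ℚ)+2) * (∑ k ∈ Finset.range (n+2+1), Bq k * Bq (n+2-k)) = 0 := by
  rw [Finset.sum_range_succ (fun k => Bq k * Bq (n+1-k)) (n+1),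
      Finset.sum_range_succ (fun k => Bq k * Bq (n+2-k)) (n+2),
      Finset.sum_range_succ (fun k => Bq k * Bq (n+2-k)) (n+1)]
  rw [show n+1-(n+1) = 0 by omega, show n+2-(n+2) = 0 by omega,
      show n+2-(n+1) = 1 by omega]
  have H : -81*(3*(n:ℚ)+2)*(3*(n:ℚ)+4) * (∑ k ∈ Finset.range (n+1), Bq k * Bq (n-k))
      + (216*(n:ℚ)^2+594*(n:ℚ)+420) * (∑ k ∈ Finset.range (n+1), Bq k * Bq (n+1-k))
      - 8*(2*(n:ℚ)+3)*((n:ℚ)+2) * (∑ k ∈ Finset.range (n+1), Bq k * Bq (n+2-k))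
      = Gc n n + (-81*(3*(n:ℚ)+2)*(3*(n:ℚ)+4)) * (Bq n * Bq 0)
        + (216*(n:ℚ)^2+594*(n:ℚ)+420) * (Bq n * Bq 1)
        - 8*(2*(n:ℚ)+3)*((n:ℚ)+2) * (Bq n * Bq 2) := by
    rw [Finset.mul_sum, Finset.mul_sum, Finset.mul_sum,
        ← Finset.sum_add_distrib, ← Finset.sum_sub_distrib]
    rw [Finset.sum_range_succ]
    rw [show n - n = 0 by omega, show n+1-n = 1 by omega, show n+2-n = 2 by omega]
    have htel : ∑ k ∈ Finset.range n,
        (-81*(3*(n:ℚ)+2)*(3*(n:ℚ)+4) * (Bq k * Bq (n-k))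
          + (216*(n:ℚ)^2+594*(n:ℚ)+420) * (Bq k * Bq (n+1-k))
          - 8*(2*(n:ℚ)+3)*((n:ℚ)+2) * (Bq k * Bq (n+2-k)))
        = Gc n n - Gc n 0 := by
      rw [← Finset.sum_range_sub (fun k => Gc n k) n]
      apply Finset.sum_congr rfl
      intro k hk
      rw [Finset.mem_range] at hk
      obtain ⟨j, rfl⟩ : ∃ j, n = k + j + 1 := ⟨n - k - 1, by omega⟩
      rw [show k+j+1-k = j+1 by omega, show k+j+1+1-k = j+2 by omega,
          show k+j+1+2-k = j+3 by omega]
      have hkey := key j k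
      push_cast
      linear_combination hkey
    rw [htel, Gc_zero]
    ring
  rw [Bq_zero, Bq_one, Bq_two] at H
  rw [Bq_zero, Bq_one]
  have hb := bdy n
  linear_combination H + hb

theorem a006256_recurrence (A : ℕ → ℤ)
    (hA : ∀ n : ℕ, A n = ∑ k ∈ Finset.range (n + 1),
      (Nat.choose (3 * k) k : ℤ) * (Nat.choose (3 * n - 3 * k) (n - k) : ℤ)) :
    ∀ n : ℕ, -81 * (3 * (n : ℤ) + 2) * (3 * (n : ℤ) + 4) * A n
      + (216 * (n : ℤ) ^ 2 + 594 * (n : ℤ) + 420) * A (n + 1)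
      - 8 * (2 * (n : ℤ) + 3) * ((n : ℤ) + 2) * A (n + 2) = 0 := by
  intro n
  rw [hA n, hA (n+1), hA (n+2)]
  have hq := main_q n
  rw [← Ssum n, ← Ssum (n+1), ← Ssum (n+2)] at hq
  exact_mod_cast hq
end

section
/- For every nonnegative integer n, Σ_{j=0}^{n} 2ʲ · C(3n+1, n-j) = Σ_{k=0}^{n} C(3k, k) · C(3n-3k, n-k), where both sides are computed as natural numbers. -/
/-!
Both sides are diagonal sums `∑_{k ≤ n} F n k` of hypergeometric terms, extended by zero for
`k > n`. Zeilberger's algorithm yields, for each side, a rational certificate `R n k` such that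
`G n k = R n k * F (n + 2) k` satisfies
`a n * F (n + 2) k + b n * F (n + 1) k + c n * F n k = G n (k + 1) - G n k`
with the same polynomials `a, b, c` for both sides. Summing over `k` telescopes, so both sides
satisfy the recurrence `a n * S (n + 2) + b n * S (n + 1) + c n * S n = 0`; since `a n ≠ 0`,
they agree because they agree at `n = 0, 1`. Each certificate identity is checked by expressing
`F n k`, `F (n + 1) k` and `F (n + 2) (k + 1)` as rational multiples of `F (n + 2) k`.
-/

open Finset

theorem Nat.choose_add_add_three_mul (d e : ℕ) :
    (d + e + 3).choose (d + 1) * ((d + 1) * (e + 1) * (e + 2)) =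
      (d + e).choose d * ((d + e + 1) * (d + e + 2) * (d + e + 3)) := by
  have h₁ := Nat.add_one_mul_choose_eq (d + e) d
  have h₂ := Nat.choose_mul_succ_eq (d + e + 1) (d + 1)
  have h₃ := Nat.choose_mul_succ_eq (d + e + 2) (d + 1)
  rw [show d + e + 1 + 1 - (d + 1) = e + 1 by omega] at h₂
  rw [show d + e + 2 + 1 - (d + 1) = e + 2 by omega] at h₃
  calc _ = (d + e + 2 + 1).choose (d + 1) * (e + 2) * ((d + 1) * (e + 1)) := by ring
    _ = (d + e + 1 + 1).choose (d + 1) * (e + 1) * ((d + 1) * (d + e + 3)) := by rw [← h₃]; ring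
    _ = (d + e + 1).choose (d + 1) * (d + 1) * ((d + e + 2) * (d + e + 3)) := by rw [← h₂]; ring
    _ = _ := by rw [← h₁]; ring

theorem three_mul_intCast_add_ne_zero (z : ℤ) {r : ℤ} (hr : ¬ 3 ∣ r) :
    (3 * z + r : ℚ) ≠ 0 := by
  exact_mod_cast (by omega : 3 * z + r ≠ 0)

section Recurrence

variable {R : Type*}

def diagSum [AddCommMonoid R] (F : ℕ → ℕ → R) (m : ℕ) : R := ∑ k ∈ range (m + 1), F m k

theorem diagSum_eq_sum_range [AddCommMonoid R] {F : ℕ → ℕ → R}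
    (hF : ∀ m k, m < k → F m k = 0) {m N : ℕ} (h : m < N) :
    diagSum F m = ∑ k ∈ range N, F m k :=
  sum_subset (range_subset_range.2 h) fun k _ hk => hF m k (by simpa using hk)

theorem diagSum_recurrence_of_telescoping [CommRing R] {F : ℕ → ℕ → R}
    (hF : ∀ m k, m < k → F m k = 0) {a b c : R} {G : ℕ → R} {n : ℕ} (hG₀ : G 0 = 0)
    (hG : G (n + 3) = 0)
    (h : ∀ k, a * F (n + 2) k + b * F (n + 1) k + c * F n k = G (k + 1) - G k) :
    a * diagSum F (n + 2) + b * diagSum F (n + 1) + c * diagSum F n = 0 := by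
  rw [diagSum_eq_sum_range hF (m := n + 2) (N := n + 3) (by omega),
    diagSum_eq_sum_range hF (m := n + 1) (N := n + 3) (by omega),
    diagSum_eq_sum_range hF (m := n) (N := n + 3) (by omega),
    mul_sum, mul_sum, mul_sum, ← sum_add_distrib, ← sum_add_distrib]
  simp only [h]
  rw [sum_range_sub, hG, hG₀, sub_zero]

theorem eq_of_recurrence [CommRing R] [NoZeroDivisors R] {a b c : ℕ → R}
    (ha : ∀ n, a n ≠ 0) {u v : ℕ → R}
    (hu : ∀ n, a n * u (n + 2) + b n * u (n + 1) + c n * u n = 0)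
    (hv : ∀ n, a n * v (n + 2) + b n * v (n + 1) + c n * v n = 0)
    (h₀ : u 0 = v 0) (h₁ : u 1 = v 1) : u = v := by
  suffices ∀ n, u n = v n ∧ u (n + 1) = v (n + 1) from funext fun n => (this n).1
  intro n
  induction n with
  | zero => exact ⟨h₀, h₁⟩
  | succ n ih =>
    refine ⟨ih.2, mul_left_cancel₀ (ha n) ?_⟩
    linear_combination hu n - hv n - b n * ih.2 - c n * ih.1

end Recurrence

namespace Ruehr

def coef₂ (n : ℕ) : ℚ := 8 * (2 * n + 3) * (n + 2)
def coef₁ (n : ℕ) : ℚ := -6 * (36 * n ^ 2 + 99 * n + 70)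
def coef₀ (n : ℕ) : ℚ := 81 * (3 * n + 2) * (3 * n + 4)

theorem coef₂_ne_zero (n : ℕ) : coef₂ n ≠ 0 := by
  rw [coef₂]
  positivity

def leftTerm (m j : ℕ) : ℚ :=
  if j ≤ m then 2 ^ j * ((3 * m + 1).choose (m - j) : ℚ) else 0

theorem leftTerm_eq_zero {m j : ℕ} (h : m < j) : leftTerm m j = 0 := if_neg (by omega)

-- The factor `m - j + 1` vanishes at `j = m + 1`, so this also holds past the diagonal.
theorem leftTerm_eq_succ_mul (m j : ℕ) :
    leftTerm m j = leftTerm (m + 1) j *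
      (((m : ℚ) - j + 1) * (2 * m + j + 2) * (2 * m + j + 3)) /
      ((3 * m + 2) * (3 * m + 3) * (3 * m + 4)) := by
  rcases le_or_gt j m with hjm | hmj
  · obtain ⟨t, rfl⟩ := Nat.exists_eq_add_of_le hjm
    have h := Nat.choose_add_add_three_mul t (3 * j + 2 * t + 1)
    rw [show t + (3 * j + 2 * t + 1) + 3 = 3 * (j + t + 1) + 1 by ring,
      show t + (3 * j + 2 * t + 1) = 3 * (j + t) + 1 by ring] at h
    have hq : ((3 * (j + t + 1) + 1).choose (t + 1) : ℚ) *
          ((t + 1) * (3 * j + 2 * t + 2) * (3 * j + 2 * t + 3)) =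
        (3 * (j + t) + 1).choose t * ((3 * (j + t) + 2) * (3 * (j + t) + 3) * (3 * (j + t) + 4)) := by
      exact_mod_cast h
    rw [leftTerm, leftTerm, if_pos hjm, if_pos (by omega), Nat.add_sub_cancel_left,
      show j + t + 1 - j = t + 1 by omega, eq_div_iff (by positivity)]
    push_cast
    linear_combination -(2 : ℚ) ^ j * hq
  · rw [leftTerm_eq_zero hmj]
    rcases (Nat.succ_le_of_lt hmj).eq_or_lt with rfl | h
    · push_cast
      ring
    · simp [leftTerm_eq_zero h]

theorem leftTerm_succ_right (m j : ℕ) :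
    leftTerm m (j + 1) = leftTerm m j * (2 * ((m : ℚ) - j)) / (2 * m + j + 2) := by
  rcases lt_or_ge j m with hjm | hmj
  · obtain ⟨t, rfl⟩ := Nat.exists_eq_add_of_lt hjm
    have h := Nat.choose_succ_right_eq (3 * (j + t + 1) + 1) t
    rw [show 3 * (j + t + 1) + 1 - t = 3 * j + 2 * t + 4 by omega] at h
    have hq : ((3 * (j + t + 1) + 1).choose (t + 1) : ℚ) * (t + 1) =
        (3 * (j + t + 1) + 1).choose t * (3 * j + 2 * t + 4) := by
      exact_mod_cast h
    rw [leftTerm, leftTerm, if_pos (by omega), if_pos (by omega),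
      show j + t + 1 - (j + 1) = t by omega, show j + t + 1 - j = t + 1 by omega,
      eq_div_iff (by positivity)]
    push_cast
    linear_combination -2 * (2 : ℚ) ^ j * hq
  · rw [leftTerm_eq_zero (by omega : m < j + 1)]
    rcases hmj.eq_or_lt with rfl | h
    · simp
    · simp [leftTerm_eq_zero h]

def leftCert (n j : ℕ) : ℚ :=
  ((-140 * j + 272 * j ^ 2 - 75 * j ^ 3 - 137 * j ^ 4 - 37 * j ^ 5 - 3 * j ^ 6
    + n * (-226 * j + 501 * j ^ 2 - 276 * j ^ 3 - 195 * j ^ 4 - 24 * j ^ 5)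
    + n ^ 2 * (-118 * j + 291 * j ^ 2 - 230 * j ^ 3 - 63 * j ^ 4)
    + n ^ 3 * (-20 * j + 54 * j ^ 2 - 54 * j ^ 3)) : ℚ) /
    ((n + 1) * (n + 2) * (3 * n + 5) * (3 * n + 7)) * leftTerm (n + 2) j

theorem leftTerm_telescoping (n j : ℕ) :
    coef₂ n * leftTerm (n + 2) j + coef₁ n * leftTerm (n + 1) j + coef₀ n * leftTerm n j =
      leftCert n (j + 1) - leftCert n j := by
  rw [leftCert, leftCert, leftTerm_succ_right (n + 2) j, leftTerm_eq_succ_mul n j,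
    leftTerm_eq_succ_mul (n + 1) j, coef₂, coef₁, coef₀]
  push_cast
  field_simp
  ring

-- `ratio t = C(3t, t) / C(3t + 3, t + 1)` for `t : ℕ`; it vanishes at `t = -1`, which makes the
-- `rightTerm` ratio lemmas hold past the diagonal as well.
def ratio (y : ℚ) : ℚ := 2 * (y + 1) * (2 * y + 1) / (3 * (3 * y + 1) * (3 * y + 2))

theorem ratio_natCast_pos (k : ℕ) : 0 < ratio k := by
  rw [ratio]
  positivity

theorem cast_choose_three_mul_eq_mul_ratio (t : ℕ) :
    ((3 * t).choose t : ℚ) = (3 * (t + 1)).choose (t + 1) * ratio t := by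
  have h := Nat.choose_add_add_three_mul t (2 * t)
  rw [show t + 2 * t + 3 = 3 * (t + 1) by ring, show t + 2 * t = 3 * t by ring] at h
  have hq : ((3 * (t + 1)).choose (t + 1) : ℚ) * ((t + 1) * (2 * t + 1) * (2 * t + 2)) =
      (3 * t).choose t * ((3 * t + 1) * (3 * t + 2) * (3 * (t + 1))) := by
    exact_mod_cast h
  rw [ratio, mul_div_assoc', eq_div_iff (by positivity)]
  apply mul_right_cancel₀ (b := (t + 1 : ℚ)) (by positivity)
  linear_combination -hq

def rightTerm (m k : ℕ) : ℚ :=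
  if k ≤ m then ((3 * k).choose k : ℚ) * (3 * (m - k)).choose (m - k) else 0

theorem rightTerm_eq_zero {m k : ℕ} (h : m < k) : rightTerm m k = 0 := if_neg (by omega)

theorem rightTerm_eq_succ_mul_ratio {m k : ℕ} {x : ℚ} (hx : (m : ℚ) - k = x) :
    rightTerm m k = rightTerm (m + 1) k * ratio x := by
  rcases le_or_gt k m with hkm | hmk
  · obtain ⟨t, rfl⟩ := Nat.exists_eq_add_of_le hkm
    obtain rfl : x = t := by rw [← hx]; push_cast; ring
    rw [rightTerm, rightTerm, if_pos hkm, if_pos (by omega), Nat.add_sub_cancel_left,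
      show k + t + 1 - k = t + 1 by omega, cast_choose_three_mul_eq_mul_ratio t, mul_assoc]
  · rw [rightTerm_eq_zero hmk]
    rcases (Nat.succ_le_of_lt hmk).eq_or_lt with rfl | h
    · obtain rfl : x = -1 := by rw [← hx]; push_cast; ring
      simp [ratio]
    · simp [rightTerm_eq_zero h]

theorem rightTerm_succ_right {m k : ℕ} {y : ℚ} (hy : (m : ℚ) - k - 1 = y) :
    rightTerm m (k + 1) = rightTerm m k * ratio y / ratio k := by
  rw [eq_div_iff (ratio_natCast_pos k).ne']
  rcases lt_or_ge k m with hkm | hmk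
  · obtain ⟨t, rfl⟩ := Nat.exists_eq_add_of_lt hkm
    obtain rfl : y = t := by rw [← hy]; push_cast; ring
    rw [rightTerm, rightTerm, if_pos (by omega), if_pos (by omega),
      show k + t + 1 - k = t + 1 by omega, show k + t + 1 - (k + 1) = t by omega,
      cast_choose_three_mul_eq_mul_ratio k, cast_choose_three_mul_eq_mul_ratio t]
    ring
  · rw [rightTerm_eq_zero (by omega : m < k + 1)]
    rcases hmk.eq_or_lt with rfl | h
    · obtain rfl : y = -1 := by rw [← hy]; ring
      simp [ratio]
    · simp [rightTerm_eq_zero h]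

def rightCert (n k : ℕ) : ℚ :=
  -4 * k * ((3 * n + 4) ^ 2 - 3 * k * (n + 2) * (6 * n + 7) + 2 * k ^ 2 * (9 * n + 10)) /
    ((n + 1) * (3 * ((n : ℚ) - k) + 4) * (3 * ((n : ℚ) - k) + 5)) * rightTerm (n + 2) k

theorem rightTerm_telescoping (n k : ℕ) :
    coef₂ n * rightTerm (n + 2) k + coef₁ n * rightTerm (n + 1) k + coef₀ n * rightTerm n k =
      rightCert n (k + 1) - rightCert n k := by
  obtain ⟨x, hx⟩ : ∃ x : ℤ, (n : ℚ) - k = x := ⟨n - k, by push_cast; ring⟩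
  rw [rightCert, rightCert,
    rightTerm_succ_right (m := n + 2) (y := x + 1) (by push_cast; linarith),
    rightTerm_eq_succ_mul_ratio hx,
    rightTerm_eq_succ_mul_ratio (m := n + 1) (x := x + 1) (by push_cast; linarith),
    coef₂, coef₁, coef₀]
  have h₁ := three_mul_intCast_add_ne_zero x (r := 1) (by decide)
  have h₂ := three_mul_intCast_add_ne_zero x (r := 2) (by decide)
  have h₃ := three_mul_intCast_add_ne_zero (x + 1) (r := 1) (by decide)
  have h₄ := three_mul_intCast_add_ne_zero (x + 1) (r := 2) (by decide)
  have h₅ := three_mul_intCast_add_ne_zero x (r := 4) (by decide)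
  have h₆ := three_mul_intCast_add_ne_zero x (r := 5) (by decide)
  have h₇ := three_mul_intCast_add_ne_zero (x - 1) (r := 4) (by decide)
  have h₈ := three_mul_intCast_add_ne_zero (x - 1) (r := 5) (by decide)
  push_cast at h₁ h₂ h₃ h₄ h₅ h₆ h₇ h₈ ⊢
  rw [hx, show (n : ℚ) - (k + 1) = x - 1 by linarith]
  simp only [ratio]
  field_simp
  rw [show (n : ℚ) = x + k by linarith]
  ring

theorem diagSum_leftTerm_recurrence (n : ℕ) :
    coef₂ n * diagSum leftTerm (n + 2) + coef₁ n * diagSum leftTerm (n + 1) +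
      coef₀ n * diagSum leftTerm n = 0 :=
  diagSum_recurrence_of_telescoping (fun _ _ => leftTerm_eq_zero) (by simp [leftCert])
    (by simp [leftCert, leftTerm_eq_zero]) (leftTerm_telescoping n)

theorem diagSum_rightTerm_recurrence (n : ℕ) :
    coef₂ n * diagSum rightTerm (n + 2) + coef₁ n * diagSum rightTerm (n + 1) +
      coef₀ n * diagSum rightTerm n = 0 :=
  diagSum_recurrence_of_telescoping (fun _ _ => rightTerm_eq_zero) (by simp [rightCert])
    (by simp [rightCert, rightTerm_eq_zero]) (rightTerm_telescoping n)

theorem diagSum_leftTerm (n : ℕ) :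
    diagSum leftTerm n =
      ((∑ j ∈ range (n + 1), 2 ^ j * (3 * n + 1).choose (n - j) : ℕ) : ℚ) := by
  push_cast
  exact sum_congr rfl fun j hj => if_pos (Nat.lt_succ_iff.1 (mem_range.1 hj))

theorem diagSum_rightTerm (n : ℕ) :
    diagSum rightTerm n =
      ((∑ k ∈ range (n + 1), (3 * k).choose k * (3 * n - 3 * k).choose (n - k) : ℕ) : ℚ) := by
  push_cast
  refine sum_congr rfl fun k hk => ?_
  have hkn := Nat.lt_succ_iff.1 (mem_range.1 hk)
  rw [rightTerm, if_pos hkn, show 3 * n - 3 * k = 3 * (n - k) by omega]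

end Ruehr

open Ruehr

theorem ruehr_sum_eq_a006256 (n : ℕ) :
    ∑ j ∈ Finset.range (n + 1), 2 ^ j * Nat.choose (3 * n + 1) (n - j) =
      ∑ k ∈ Finset.range (n + 1), Nat.choose (3 * k) k * Nat.choose (3 * n - 3 * k) (n - k) := by
  have h : diagSum leftTerm = diagSum rightTerm :=
    eq_of_recurrence coef₂_ne_zero diagSum_leftTerm_recurrence diagSum_rightTerm_recurrence
      (by rw [diagSum_leftTerm, diagSum_rightTerm]; rfl)
      (by rw [diagSum_leftTerm, diagSum_rightTerm]; rfl)
  exact_mod_cast (diagSum_leftTerm n).symm.trans ((congrFun h n).trans (diagSum_rightTerm n))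
end
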